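/- arXiv:math/0008102 — 6 statements merged into one kernel-verified Lean document; each statement's English description precedes it below -/
import Mathlib

section
/- If m₀, …, m_{N−1} : 𝕋 → ℂ are measurable, essentially bounded functions such that for almost every z ∈ 𝕋 the N×N matrix M(z) with entries M_{i,j}(z) = m_i(e^{2πij/N} z^{1/N}) (i.e., m_i evaluated at the j-th N-th root of z) is unitary, then for i ≠ j and every f ∈ L^∞(𝕋), ∫_𝕋 conj(m_i(z)) f(z^N) m_j(z) dμ(z) = 0, where μ is normalized Haar measure on 𝕋. -/
open MeasureTheory Complex
open scoped ComplexConjugate ENNReal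

noncomputable instance : MeasurableSpace Circle := borel Circle
instance : BorelSpace Circle := ⟨rfl⟩

/-- Normalized Haar measure on the circle `𝕋` (Haar measure on a compact group is normalized). -/
noncomputable def μC : Measure Circle := Measure.haar

/-- A fixed measurable branch of the `N`-th root on the circle. -/
noncomputable def nthRoot (N : ℕ) (z : Circle) : Circle := Circle.exp ((z : ℂ).arg / N)

/-- The `N`-th roots of `z` : `σ_k(z) = e^{2πik/N} z^{1/N}`, `k = 0, …, N-1`. -/
noncomputable def circRoots (N : ℕ) (z : Circle) (k : Fin N) : Circle :=
  Circle.exp (2 * Real.pi * (k : ℝ) / N) * nthRoot N z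

/-- `rootSum N F z = Σ_{w : w^N = z} F w`, the sum over the `N`-th roots of `z`. -/
noncomputable def rootSum (N : ℕ) (F : Circle → ℂ) (z : Circle) : ℂ :=
  ∑ k : Fin N, F (circRoots N z k)

/-! ### Auxiliary material -/

instance : μC.IsHaarMeasure := by unfold μC; infer_instance
instance : μC.IsMulLeftInvariant := by unfold μC; infer_instance
instance : IsFiniteMeasure μC := by unfold μC; infer_instance

namespace Stmt0Aux

/-- The primitive `N`-th root of unity on the circle. -/
noncomputable def ζ (N : ℕ) : Circle := Circle.exp (2 * Real.pi / N)

lemma exp_nat_mul (t : ℝ) (n : ℕ) : Circle.exp (n * t) = Circle.exp t ^ n := by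
  induction n with
  | zero => simp
  | succ n ih =>
    rw [pow_succ, ← ih, ← Circle.exp_add]
    congr 1
    push_cast
    ring

lemma coe_pow (z : Circle) (n : ℕ) : ((z ^ n : Circle) : ℂ) = (z : ℂ) ^ n := by
  induction n with
  | zero => simp
  | succ n ih => rw [pow_succ, pow_succ, Circle.coe_mul, ih]

lemma circRoots_eq (N : ℕ) (z : Circle) (k : Fin N) :
    circRoots N z k = ζ N ^ (k : ℕ) * nthRoot N z := by
  rw [circRoots, ζ, ← exp_nat_mul]
  congr 2
  ring

lemma zeta_pow (N : ℕ) (hN : N ≠ 0) : ζ N ^ N = 1 := by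
  have hN' : (N : ℝ) ≠ 0 := Nat.cast_ne_zero.mpr hN
  rw [ζ, ← exp_nat_mul, mul_div_cancel₀ _ hN', Circle.exp_two_pi]

lemma nthRoot_pow (N : ℕ) (hN : N ≠ 0) (z : Circle) : nthRoot N z ^ N = z := by
  have hN' : (N : ℝ) ≠ 0 := Nat.cast_ne_zero.mpr hN
  rw [nthRoot, ← exp_nat_mul, mul_div_cancel₀ _ hN', Circle.exp_arg]

lemma exists_pow_eq (N : ℕ) (hN : N ≠ 0) (u : Circle) (hu : u ^ N = 1) :
    ∃ c : Fin N, ζ N ^ (c : ℕ) = u := by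
  haveI : NeZero N := ⟨hN⟩
  have hprim : IsPrimitiveRoot (Complex.exp (2 * Real.pi * Complex.I / N)) N :=
    Complex.isPrimitiveRoot_exp N hN
  have hu' : ((u : ℂ)) ^ N = 1 := by
    rw [← coe_pow, hu, Circle.coe_one]
  obtain ⟨c, hc, hpow⟩ := hprim.eq_pow_of_pow_eq_one hu'
  refine ⟨⟨c, hc⟩, ?_⟩
  have hcoe : ((ζ N : Circle) : ℂ) = Complex.exp (2 * Real.pi * Complex.I / N) := by
    rw [ζ, Circle.coe_exp]
    congr 1
    push_cast
    ring
  apply Subtype.coe_injective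
  show ((ζ N ^ ((⟨c, hc⟩ : Fin N) : ℕ) : Circle) : ℂ) = (u : ℂ)
  simp only [Fin.val_mk]
  rw [coe_pow, hcoe]
  exact hpow

lemma sum_shift (N : ℕ) (F : Circle → ℂ) (a : Circle) (hN : N ≠ 0) (c : Fin N) :
    ∑ k : Fin N, F (ζ N ^ (k : ℕ) * (ζ N ^ (c : ℕ) * a)) =
      ∑ k : Fin N, F (ζ N ^ (k : ℕ) * a) := by
  haveI : NeZero N := ⟨hN⟩
  have key : ∀ k : Fin N, ζ N ^ (((k + c : Fin N)) : ℕ) = ζ N ^ (k : ℕ) * ζ N ^ (c : ℕ) := by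
    intro k
    have h1 : (((k + c : Fin N)) : ℕ) = ((k : ℕ) + (c : ℕ)) % N := Fin.val_add k c
    rw [h1, ← pow_add]
    conv_rhs => rw [← Nat.mod_add_div ((k : ℕ) + (c : ℕ)) N]
    rw [pow_add, pow_mul, zeta_pow N hN, one_pow, mul_one]
  calc ∑ k : Fin N, F (ζ N ^ (k : ℕ) * (ζ N ^ (c : ℕ) * a))
      = ∑ k : Fin N, F (ζ N ^ (((k + c : Fin N)) : ℕ) * a) := by
        refine Finset.sum_congr rfl fun k _ => ?_
        rw [key, mul_assoc]
    _ = ∑ k : Fin N, F (ζ N ^ (k : ℕ) * a) :=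
        Fintype.sum_equiv (Equiv.addRight c) _ _ (fun k => rfl)

lemma rootSum_pow (N : ℕ) (hN : N ≠ 0) (F : Circle → ℂ) (z : Circle) :
    rootSum N F (z ^ N) = ∑ k : Fin N, F (ζ N ^ (k : ℕ) * z) := by
  have h1 : nthRoot N (z ^ N) ^ N = z ^ N := nthRoot_pow N hN _
  have hu : (nthRoot N (z ^ N) * z⁻¹) ^ N = 1 := by
    rw [mul_pow, h1, inv_pow, mul_inv_cancel]
  obtain ⟨c, hc⟩ := exists_pow_eq N hN _ hu
  have h2 : nthRoot N (z ^ N) = ζ N ^ (c : ℕ) * z := by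
    rw [hc]
    group
  rw [rootSum]
  simp only [circRoots_eq, h2]
  exact sum_shift N F z hN c

lemma measurePreserving_pow (N : ℕ) (hN : N ≠ 0) :
    MeasurePreserving (fun z : Circle => z ^ N) μC μC := by
  have hsurj : Function.Surjective (fun z : Circle => z ^ N) := fun w =>
    ⟨nthRoot N w, nthRoot_pow N hN w⟩
  exact (powMonoidHom N : Circle →* Circle).measurePreserving (continuous_pow N) hsurj rfl

end Stmt0Aux

set_option maxHeartbeats 1000000 in
open Stmt0Aux in
/-- If the matrix of the `m_i` at the `N`-th roots is a.e. unitary, then the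
Hilbert-module inner products vanish: `∫ conj(m_i(z)) f(z^N) m_j(z) dμ(z) = 0` for `i ≠ j`,
`f ∈ L^∞(𝕋)`. -/
theorem stmt0 (N : ℕ) (hN : 2 ≤ N) (m : Fin N → Circle → ℂ)
    (hm_meas : ∀ i, Measurable (m i)) (hm_bdd : ∀ i, ∃ C, ∀ z, ‖m i z‖ ≤ C)
    (hunitary : ∀ᵐ z ∂μC,
      (Matrix.of fun i j : Fin N => m i (circRoots N z j)) ∈ Matrix.unitaryGroup (Fin N) ℂ)
    (i j : Fin N) (hij : i ≠ j)
    (f : Circle → ℂ) (hf_meas : Measurable f) (hf_bdd : ∃ C, ∀ z, ‖f z‖ ≤ C) :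
    ∫ z, conj (m i z) * f (z ^ N) * m j z ∂μC = 0 := by
  have hN0 : N ≠ 0 := by omega
  set G : Circle → ℂ := fun z => conj (m i z) * f (z ^ N) * m j z with hG
  -- measurability and integrability of G
  have hpowm : Measurable (fun z : Circle => z ^ N) := (continuous_pow N).measurable
  have hmeasG : Measurable G := by
    apply Measurable.mul
    apply Measurable.mul
    · exact Complex.continuous_conj.measurable.comp (hm_meas i)
    · exact hf_meas.comp hpowm
    · exact hm_meas j
  obtain ⟨Ci, hCi⟩ := hm_bdd i
  obtain ⟨Cj, hCj⟩ := hm_bdd j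
  obtain ⟨Cf, hCf⟩ := hf_bdd
  have hint : Integrable G μC := by
    refine ⟨hmeasG.aestronglyMeasurable, ?_⟩
    apply HasFiniteIntegral.of_bounded (C := |Ci| * |Cf| * |Cj|)
    filter_upwards with z
    have : ‖G z‖ = ‖m i z‖ * ‖f (z ^ N)‖ * ‖m j z‖ := by
      rw [hG]
      simp [norm_mul]
    rw [this]
    have h1 : ‖m i z‖ ≤ |Ci| := (hCi z).trans (le_abs_self Ci)
    have h2 : ‖f (z ^ N)‖ ≤ |Cf| := (hCf _).trans (le_abs_self Cf)
    have h3 : ‖m j z‖ ≤ |Cj| := (hCj z).trans (le_abs_self Cj)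
    exact mul_le_mul (mul_le_mul h1 h2 (norm_nonneg _) (abs_nonneg _)) h3 (norm_nonneg _)
      (by positivity)
  -- a.e. vanishing of the shifted sum
  have hae : ∀ᵐ z ∂μC, ∑ k : Fin N, G (ζ N ^ (k : ℕ) * z) = 0 := by
    have h1 : ∀ᵐ z ∂μC,
        (Matrix.of fun a b : Fin N => m a (circRoots N (z ^ N) b)) ∈
          Matrix.unitaryGroup (Fin N) ℂ :=
      MeasureTheory.Measure.QuasiMeasurePreserving.ae
        (p := fun w => (Matrix.of fun a b : Fin N => m a (circRoots N w b)) ∈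
          Matrix.unitaryGroup (Fin N) ℂ)
        (measurePreserving_pow N hN0).quasiMeasurePreserving hunitary
    filter_upwards [h1] with z hz
    set M : Matrix (Fin N) (Fin N) ℂ :=
      Matrix.of fun a b : Fin N => m a (circRoots N (z ^ N) b) with hM
    have hMM : M * star M = 1 := Matrix.mem_unitaryGroup_iff.mp hz
    have hentry : (M * star M) j i = (1 : Matrix (Fin N) (Fin N) ℂ) j i := by rw [hMM]
    rw [Matrix.one_apply_ne hij.symm] at hentry
    have hsum : ∑ k : Fin N, m j (circRoots N (z ^ N) k) * conj (m i (circRoots N (z ^ N) k))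
        = 0 := by
      rw [← hentry, Matrix.mul_apply]
      refine Finset.sum_congr rfl fun k _ => ?_
      rw [Matrix.star_eq_conjTranspose, Matrix.conjTranspose_apply]
      rfl
    have hroot : ∑ k : Fin N, m j (ζ N ^ (k : ℕ) * z) * conj (m i (ζ N ^ (k : ℕ) * z)) = 0 := by
      have := rootSum_pow N hN0 (fun w => m j w * conj (m i w)) z
      rw [rootSum] at this
      rw [← this]
      exact hsum
    have hzN : ∀ k : Fin N, (ζ N ^ (k : ℕ) * z) ^ N = z ^ N := by
      intro k
      rw [mul_pow, ← pow_mul, mul_comm (k : ℕ) N, pow_mul, zeta_pow N hN0, one_pow, one_mul]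
    calc ∑ k : Fin N, G (ζ N ^ (k : ℕ) * z)
        = ∑ k : Fin N, f (z ^ N) *
            (m j (ζ N ^ (k : ℕ) * z) * conj (m i (ζ N ^ (k : ℕ) * z))) := by
          refine Finset.sum_congr rfl fun k _ => ?_
          rw [hG]
          simp only [hzN k]
          ring
      _ = f (z ^ N) *
            ∑ k : Fin N, m j (ζ N ^ (k : ℕ) * z) * conj (m i (ζ N ^ (k : ℕ) * z)) := by
          rw [Finset.mul_sum]
      _ = 0 := by rw [hroot, mul_zero]
  -- integrate
  have hcomp : ∀ k : Fin N, Integrable (fun z => G (ζ N ^ (k : ℕ) * z)) μC := fun k =>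
    ((measurePreserving_mul_left μC (ζ N ^ (k : ℕ))).integrable_comp
      hint.aestronglyMeasurable).mpr hint
  have hzero : ∫ z, (∑ k : Fin N, G (ζ N ^ (k : ℕ) * z)) ∂μC = 0 :=
    integral_eq_zero_of_ae hae
  have hsum_int : ∫ z, (∑ k : Fin N, G (ζ N ^ (k : ℕ) * z)) ∂μC
      = ∑ k : Fin N, ∫ z, G (ζ N ^ (k : ℕ) * z) ∂μC :=
    integral_finset_sum _ (fun k _ => hcomp k)
  have heach : ∀ k : Fin N, ∫ z, G (ζ N ^ (k : ℕ) * z) ∂μC = ∫ z, G z ∂μC := fun k =>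
    integral_mul_left_eq_self G (ζ N ^ (k : ℕ))
  have hfinal : (N : ℂ) * ∫ z, G z ∂μC = 0 := by
    have : ∑ k : Fin N, ∫ z, G (ζ N ^ (k : ℕ) * z) ∂μC = (N : ℂ) * ∫ z, G z ∂μC := by
      simp [heach, Finset.sum_const, Finset.card_univ, nsmul_eq_mul]
    rw [← this, ← hsum_int, hzero]
  have hNC : (N : ℂ) ≠ 0 := Nat.cast_ne_zero.mpr hN0
  exact (mul_eq_zero.mp hfinal).resolve_left hNC
end

section
/- Let μ be normalized Haar measure on 𝕋 and N ≥ 2. For m ∈ L^∞(𝕋), define S_m on L²(𝕋, μ) by (S_m f)(z) = √N · m(z) · f(z^N). Then for m, n ∈ L^∞(𝕋), the adjoint satisfies (S_n* S_m f)(z) = (Σ_{w: w^N = z} conj(n(w)) m(w)) · f(z) for a.e. z, i.e., S_n* S_m is the multiplication operator by the function z ↦ Σ_{w^N=z} conj(n(w)) m(w). -/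
open MeasureTheory Complex
open scoped ComplexConjugate ENNReal

instance inst_s1 : IsFiniteMeasure μC := by unfold μC; exact CompactSpace.isFiniteMeasure

lemma measurable_nthRoot (N : ℕ) : Measurable (nthRoot N) := by
  have hc : Continuous (fun z : Circle => (z : ℂ)) := continuous_subtype_val
  have h1 : Measurable fun z : Circle => (z : ℂ) := hc.measurable
  have h2 : Measurable fun z : Circle => ((z : ℂ).arg / N) :=
    (Complex.measurable_arg.comp h1).div_const _
  exact Circle.exp.continuous.measurable.comp h2

lemma measurable_rootSum {N : ℕ} {F : Circle → ℂ} (hF : Measurable F) :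
    Measurable (rootSum N F) := by
  unfold rootSum
  exact Finset.measurable_sum _ fun k _ =>
    hF.comp ((measurable_const.mul (measurable_nthRoot N)))

lemma norm_rootSum_le {N : ℕ} {F : Circle → ℂ} {C : ℝ} (hC : ∀ z, ‖F z‖ ≤ C) (z : Circle) :
    ‖rootSum N F z‖ ≤ N * C := by
  calc ‖rootSum N F z‖ ≤ ∑ k : Fin N, ‖F (circRoots N z k)‖ := norm_sum_le _ _
    _ ≤ ∑ _k : Fin N, C := Finset.sum_le_sum fun k _ => hC _
    _ = N * C := by simp [mul_comm]
lemma circle_exp_nat_mul (x : ℝ) (n : ℕ) : Circle.exp (n * x) = Circle.exp x ^ n := by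
  induction n with
  | zero => simp [Circle.exp_zero]
  | succ k ih => push_cast; rw [add_mul, one_mul, Circle.exp_add, ih, pow_succ]

lemma circle_exp_int_mul (x : ℝ) (n : ℤ) : Circle.exp (n * x) = Circle.exp x ^ n := by
  cases n with
  | ofNat k =>
      rw [Int.ofNat_eq_coe, zpow_natCast, ← circle_exp_nat_mul]
      norm_num
  | negSucc k =>
      rw [zpow_negSucc, ← circle_exp_nat_mul, ← Circle.exp_neg]
      congr 1
      push_cast [Int.negSucc_eq]
      ring

lemma nthRoot_pow {N : ℕ} (hN : N ≠ 0) (z : Circle) : (nthRoot N z) ^ N = z := by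
  rw [nthRoot, ← circle_exp_nat_mul, mul_div_cancel₀ _ (by exact_mod_cast hN)]
  exact Circle.exp_arg z

lemma pow_mod_eq {G : Type*} [Group G] {ω : G} {N : ℕ} (h : ω ^ N = 1) (x : ℕ) :
    ω ^ (x % N) = ω ^ x := by
  conv_rhs => rw [← Nat.mod_add_div x N, pow_add, pow_mul, h, one_pow, mul_one]

lemma rootSum_pow {N : ℕ} (hN : N ≠ 0) (F : Circle → ℂ) (z : Circle) :
    rootSum N F (z ^ N) = ∑ k : Fin N, F (Circle.exp (2 * Real.pi / N) ^ (k : ℕ) * z) := by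
  haveI : NeZero N := ⟨hN⟩
  set ω : Circle := Circle.exp (2 * Real.pi / N) with hω
  have hωN : ω ^ N = 1 := by
    rw [hω, ← circle_exp_nat_mul, mul_div_cancel₀ _ (by exact_mod_cast hN)]
    exact Circle.exp_two_pi
  -- the chosen root is ω ^ j * z for some j
  have hr : ∃ j : ℕ, nthRoot N (z ^ N) = ω ^ j * z := by
    set r := nthRoot N (z ^ N) with hrdef
    have hrN : r ^ N = z ^ N := nthRoot_pow hN _
    set u := r * z⁻¹ with hu
    have huN : u ^ N = 1 := by
      rw [hu, mul_pow, inv_pow, hrN, mul_inv_cancel]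
    have hu1 : Circle.exp ((N : ℝ) * (u : ℂ).arg) = 1 := by
      rw [circle_exp_nat_mul, Circle.exp_arg, huN]
    obtain ⟨m, hm⟩ := Circle.exp_eq_one.mp hu1
    have harg : (u : ℂ).arg = (m : ℝ) * (2 * Real.pi / N) := by
      field_simp at hm ⊢
      linarith [hm]
    have hunew : u = ω ^ m := by
      rw [← Circle.exp_arg u, harg, circle_exp_int_mul, hω]
    refine ⟨(m % N).toNat, ?_⟩
    have hmod : ω ^ m = ω ^ ((m % N).toNat : ℕ) := by
      conv_lhs => rw [← Int.emod_add_mul_ediv m N, zpow_add, zpow_mul]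
      rw [show (N : ℤ) = (N : ℕ) from rfl, zpow_natCast, hωN, one_zpow, mul_one,
        ← zpow_natCast, Int.toNat_of_nonneg (Int.emod_nonneg m (by exact_mod_cast hN))]
    have : r = u * z := by rw [hu, inv_mul_cancel_right]
    rw [this, hunew, hmod]
  obtain ⟨j, hj⟩ := hr
  have hterm : ∀ k : Fin N, circRoots N (z ^ N) k = ω ^ ((k : ℕ) + j) * z := by
    intro k
    rw [circRoots, hj, show 2 * Real.pi * (k : ℝ) / N = (k : ℕ) * (2 * Real.pi / N) by push_cast; ring,
      circle_exp_nat_mul, ← hω, ← mul_assoc, ← pow_add]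
  rw [rootSum]
  simp_rw [hterm]
  refine Fintype.sum_equiv (Equiv.addRight (Fin.ofNat N j)) _ _ fun k => ?_
  congr 2
  rw [Equiv.coe_addRight]
  have : ((k + (Fin.ofNat N j) : Fin N) : ℕ) = ((k : ℕ) + j) % N := by
    rw [Fin.add_def]
    simp [Fin.add_def, Fin.val_ofNat]
  rw [this, pow_mod_eq hωN]
lemma map_pow_eq {N : ℕ} (hN : N ≠ 0) : μC.map (fun z : Circle => z ^ N) = μC := by
  have hsurj : Function.Surjective (fun z : Circle => z ^ N) :=
    fun z => ⟨nthRoot N z, nthRoot_pow hN z⟩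
  have hmeas : Measurable (fun z : Circle => z ^ N) := (continuous_pow N).measurable
  have h1 : (μC.map (powMonoidHom N : Circle →* Circle)).IsHaarMeasure :=
    Measure.isHaarMeasure_map_of_isFiniteMeasure μC (powMonoidHom N) (continuous_pow N) hsurj
  have h1' : (μC.map (fun z : Circle => z ^ N)).IsHaarMeasure := h1
  have h2 := Measure.isMulInvariant_eq_smul_of_compactSpace (μC.map (fun z : Circle => z ^ N)) μC
  have huniv : (μC.map (fun z : Circle => z ^ N)) Set.univ = μC Set.univ := by
    rw [Measure.map_apply hmeas MeasurableSet.univ]; simp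
  set c := Measure.haarScalarFactor (μC.map (fun z : Circle => z ^ N)) μC with hc
  have hT0 : μC Set.univ ≠ 0 := isOpen_univ.measure_ne_zero μC Set.univ_nonempty
  have hTtop : μC Set.univ ≠ ⊤ := measure_ne_top _ _
  rw [h2, Measure.smul_apply, ENNReal.smul_def, smul_eq_mul] at huniv
  have hc1 : (c : ℝ≥0∞) = 1 := (ENNReal.mul_eq_right hT0 hTtop).mp huniv
  rw [ENNReal.coe_eq_one] at hc1
  rw [h2, hc1, one_smul]

lemma key_integral {N : ℕ} (hN : N ≠ 0) (F G : Circle → ℂ) (hF : Measurable F)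
    {C : ℝ} (hFb : ∀ z, ‖F z‖ ≤ C) (hG : StronglyMeasurable G) (hGi : Integrable G μC) :
    ∫ z, rootSum N F z * G z ∂μC = (N : ℂ) * ∫ z, F z * G (z ^ N) ∂μC := by
  have hT : Measurable (fun z : Circle => z ^ N) := (continuous_pow N).measurable
  have hmap := map_pow_eq hN
  set ω : Circle := Circle.exp (2 * Real.pi / N) with hω
  have hωN : ω ^ N = 1 := by
    rw [hω, ← circle_exp_nat_mul, mul_div_cancel₀ _ (by exact_mod_cast hN)]
    exact Circle.exp_two_pi
  have hGTi : Integrable (fun z => G (z ^ N)) μC := by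
    have : Integrable G (μC.map (fun z : Circle => z ^ N)) := by rw [hmap]; exact hGi
    exact (integrable_map_measure hG.aestronglyMeasurable hT.aemeasurable).mp this
  have hH : AEStronglyMeasurable (fun z => rootSum N F z * G z)
      (μC.map (fun z : Circle => z ^ N)) := by
    rw [hmap]
    exact ((measurable_rootSum hF).aestronglyMeasurable.mul hG.aestronglyMeasurable)
  calc ∫ z, rootSum N F z * G z ∂μC
      = ∫ z, rootSum N F (z ^ N) * G (z ^ N) ∂μC := by
        conv_lhs => rw [← hmap, integral_map hT.aemeasurable hH]
    _ = ∫ z, (∑ k : Fin N, F (ω ^ (k : ℕ) * z)) * G (z ^ N) ∂μC := by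
        congr 1; ext z; rw [rootSum_pow hN]
    _ = ∑ k : Fin N, ∫ z, F (ω ^ (k : ℕ) * z) * G (z ^ N) ∂μC := by
        simp_rw [Finset.sum_mul]
        exact integral_finset_sum _ fun k _ =>
          hGTi.bdd_mul (hF.comp (measurable_const_mul _)).aestronglyMeasurable (Filter.Eventually.of_forall fun z => hFb _)
    _ = ∑ _k : Fin N, ∫ z, F z * G (z ^ N) ∂μC := by
        refine Finset.sum_congr rfl fun k _ => ?_
        have h1 : ∀ z : Circle, F (ω ^ (k : ℕ) * z) * G (z ^ N)
            = (fun w => F w * G (w ^ N)) (ω ^ (k : ℕ) * z) := by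
          intro z
          simp only
          rw [mul_pow, ← pow_mul, mul_comm (k : ℕ) N, pow_mul, hωN, one_pow, one_mul]
        simp_rw [h1]
        exact integral_mul_left_eq_self (fun w => F w * G (w ^ N)) _
    _ = (N : ℂ) * ∫ z, F z * G (z ^ N) ∂μC := by
        rw [Finset.sum_const, Finset.card_univ, Fintype.card_fin, nsmul_eq_mul]

lemma conj_rootSum (N : ℕ) (F : Circle → ℂ) (z : Circle) :
    conj (rootSum N F z) = rootSum N (fun w => conj (F w)) z := by
  simp [rootSum, map_sum]


/-- For `S_m f(z) = √N m(z) f(z^N)` on `L²(𝕋)`, the operator `S_n* S_m` is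
multiplication by `z ↦ Σ_{w^N=z} conj(n(w)) m(w)`. -/
theorem stmt1 (N : ℕ) (hN : 2 ≤ N) (m n : Circle → ℂ)
    (hm_meas : Measurable m) (hm_bdd : ∃ C, ∀ z, ‖m z‖ ≤ C)
    (hn_meas : Measurable n) (hn_bdd : ∃ C, ∀ z, ‖n z‖ ≤ C)
    (Sm Sn : Lp ℂ 2 μC →L[ℂ] Lp ℂ 2 μC)
    (hSm : ∀ f : Lp ℂ 2 μC,
      (Sm f : Circle → ℂ) =ᵐ[μC] fun z => (Real.sqrt N : ℂ) * m z * f (z ^ N))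
    (hSn : ∀ f : Lp ℂ 2 μC,
      (Sn f : Circle → ℂ) =ᵐ[μC] fun z => (Real.sqrt N : ℂ) * n z * f (z ^ N))
    (f : Lp ℂ 2 μC) :
    (ContinuousLinearMap.adjoint Sn (Sm f) : Circle → ℂ) =ᵐ[μC]
      fun z => rootSum N (fun w => conj (n w) * m w) z * f z := by
  have hN0 : N ≠ 0 := by omega
  obtain ⟨Cm, hCm⟩ := hm_bdd
  obtain ⟨Cn, hCn⟩ := hn_bdd
  have hCm0 : 0 ≤ Cm := le_trans (norm_nonneg _) (hCm 1)
  have hCn0 : 0 ≤ Cn := le_trans (norm_nonneg _) (hCn 1)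
  set Φ : Circle → ℂ := fun z => rootSum N (fun w => conj (n w) * m w) z with hΦ
  have hconjn : Measurable fun w => conj (n w) := continuous_star.measurable.comp hn_meas
  have hconjm : Measurable fun w => conj (m w) := continuous_star.measurable.comp hm_meas
  have hΦmeas : Measurable Φ := measurable_rootSum (hconjn.mul hm_meas)
  have hΦbd : ∀ z, ‖Φ z‖ ≤ N * (Cn * Cm) := by
    refine norm_rootSum_le (fun z => ?_)
    rw [norm_mul, RCLike.norm_conj]
    exact mul_le_mul (hCn z) (hCm z) (norm_nonneg _) hCn0
  have hmem : MemLp (fun z => Φ z * f z) 2 μC := by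
    refine MemLp.of_le_mul (c := (N : ℝ) * (Cn * Cm)) (Lp.memLp f)
      (hΦmeas.aestronglyMeasurable.mul (Lp.aestronglyMeasurable f))
      (Filter.Eventually.of_forall fun z => ?_)
    rw [norm_mul]
    exact mul_le_mul_of_nonneg_right (hΦbd z) (norm_nonneg _)
  set h : Lp ℂ 2 μC := hmem.toLp _ with hh
  have hadj : ContinuousLinearMap.adjoint Sn (Sm f) = h := by
    refine ext_inner_right ℂ fun g => ?_
    rw [ContinuousLinearMap.adjoint_inner_left]
    -- both sides as integrals
    set F : Circle → ℂ := fun w => n w * conj (m w) with hF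
    set G : Circle → ℂ := fun z => conj (f z) * g z with hG
    have hFmeas : Measurable F := hn_meas.mul hconjm
    have hFbd : ∀ z, ‖F z‖ ≤ Cn * Cm := by
      intro z
      rw [hF, norm_mul, RCLike.norm_conj]
      exact mul_le_mul (hCn z) (hCm z) (norm_nonneg _) hCn0
    have hGmeas : StronglyMeasurable G :=
      (continuous_star.comp_stronglyMeasurable (Lp.stronglyMeasurable f)).mul
        (Lp.stronglyMeasurable g)
    have hGint : Integrable G μC := by
      have := L2.integrable_inner (𝕜 := ℂ) f g
      simpa [RCLike.inner_apply, hG, mul_comm] using this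
    have lhs_eq : (inner ℂ (Sm f) (Sn g) : ℂ) = ∫ z, rootSum N F z * G z ∂μC := by
      rw [L2.inner_def]
      simp only [RCLike.inner_apply']
      have step1 : ∫ z, conj ((Sm f : Circle → ℂ) z) * (Sn g : Circle → ℂ) z ∂μC
          = ∫ z, (N : ℂ) * (F z * G (z ^ N)) ∂μC := by
        refine integral_congr_ae ?_
        filter_upwards [hSm f, hSn g] with z h1 h2
        rw [h1, h2]
        have hsq : ((Real.sqrt N : ℝ) : ℂ) * ((Real.sqrt N : ℝ) : ℂ) = (N : ℂ) := by
          rw [← Complex.ofReal_mul, Real.mul_self_sqrt (Nat.cast_nonneg N)]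
          push_cast; ring
        calc conj ((Real.sqrt N : ℂ) * m z * (f : Circle → ℂ) (z ^ N))
              * ((Real.sqrt N : ℂ) * n z * (g : Circle → ℂ) (z ^ N))
            = ((Real.sqrt N : ℂ) * (Real.sqrt N : ℂ))
              * (F z * G (z ^ N)) := by
              simp only [map_mul, Complex.conj_ofReal, hF, hG]; ring
          _ = (N : ℂ) * (F z * G (z ^ N)) := by rw [hsq]
      rw [step1, integral_const_mul, ← key_integral hN0 F G hFmeas hFbd hGmeas hGint]
    have hcΦ : ∀ z, conj (Φ z) = rootSum N F z := by
      intro z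
      rw [hΦ, conj_rootSum]
      unfold rootSum
      refine Finset.sum_congr rfl fun k _ => ?_
      simp only [map_mul, Complex.conj_conj, hF]
    have rhs_eq : (inner ℂ h g : ℂ) = ∫ z, rootSum N F z * G z ∂μC := by
      rw [L2.inner_def]
      simp only [RCLike.inner_apply]
      refine integral_congr_ae ?_
      filter_upwards [hmem.coeFn_toLp] with z hz
      rw [← hh] at hz
      rw [hz, map_mul, hcΦ, hG]
      ring
    rw [lhs_eq, rhs_eq]
  have e1 : (ContinuousLinearMap.adjoint Sn (Sm f) : Circle → ℂ) =ᵐ[μC] (h : Circle → ℂ) := by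
    rw [hadj]
  exact e1.trans hmem.coeFn_toLp
end

section
/- Let A : 𝕋 → U_N(ℂ) be measurable and define m_i(z) = (1/√N) Σ_{j=0}^{N−1} A_{i,j}(z^N) z^j. Then the inverse formula A_{i,j}(z) = (1/√N) Σ_{w: w^N = z} m_i(w) w^{−j} holds for all z ∈ 𝕋, and conversely, if (m_i) is any QMF system on 𝕋 and A is defined by the second formula, then A(z) ∈ U_N(ℂ) for a.e. z and the first formula recovers m_i. -/
open MeasureTheory Complex
open scoped ComplexConjugate ENNReal

namespace Stmt7Aux

variable {N : ℕ}

lemma coe_pow (z : Circle) (n : ℕ) : ((z ^ n : Circle) : ℂ) = (z : ℂ) ^ n := by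
  induction n with
  | zero => simp
  | succ n ih => simp [pow_succ, ih]

lemma coe_circRoots (N : ℕ) (z : Circle) (k : Fin N) :
    (circRoots N z k : ℂ)
      = Complex.exp (((2 * Real.pi * (k : ℝ) / N : ℝ) : ℂ) * Complex.I)
        * Complex.exp ((((z : ℂ).arg / N : ℝ) : ℂ) * Complex.I) := rfl

lemma circRoots_pow (hN : 0 < N) (z : Circle) (k : Fin N) :
    (circRoots N z k) ^ N = z := by
  have hNC : (N : ℂ) ≠ 0 := Nat.cast_ne_zero.mpr hN.ne'
  have habs := Complex.norm_mul_exp_arg_mul_I (z : ℂ)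
  rw [Circle.norm_coe, Complex.ofReal_one, one_mul] at habs
  ext
  rw [coe_pow, coe_circRoots, mul_pow, ← Complex.exp_nat_mul, ← Complex.exp_nat_mul]
  push_cast
  rw [show (N : ℂ) * (2 * (Real.pi : ℂ) * ((k : ℕ) : ℂ) / N * Complex.I)
        = ((k : ℕ) : ℂ) * (2 * (Real.pi : ℂ) * Complex.I) by field_simp,
    show (N : ℂ) * ((((z : ℂ).arg : ℂ)) / N * Complex.I) = (((z : ℂ).arg : ℂ)) * Complex.I by
      field_simp,
    Complex.exp_nat_mul_two_pi_mul_I, one_mul, habs]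

noncomputable def om (N : ℕ) : ℂ := Complex.exp (((2 * Real.pi / N : ℝ) : ℂ) * Complex.I)

lemma om_prim (hN : 0 < N) : IsPrimitiveRoot (om N) N := by
  rw [om, show (((2 * Real.pi / N : ℝ) : ℂ) * Complex.I)
      = 2 * (Real.pi : ℂ) * Complex.I / N by push_cast; ring]
  exact Complex.isPrimitiveRoot_exp N hN.ne'

lemma om_ne_zero (N : ℕ) : om N ≠ 0 := Complex.exp_ne_zero _

lemma coe_circRoots_om (N : ℕ) (z : Circle) (k : Fin N) :
    (circRoots N z k : ℂ)
      = om N ^ (k : ℕ) * Complex.exp ((((z : ℂ).arg / N : ℝ) : ℂ) * Complex.I) := by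
  rw [coe_circRoots, om, ← Complex.exp_nat_mul]
  congr 2
  push_cast
  ring

lemma circRoots_inj (hN : 0 < N) (z : Circle) {k l : Fin N}
    (h : circRoots N z k = circRoots N z l) : k = l := by
  have h' : om N ^ (k : ℕ) = om N ^ (l : ℕ) := by
    have := congrArg (fun w : Circle => (w : ℂ)) h
    simp only [coe_circRoots_om] at this
    exact mul_right_cancel₀ (Complex.exp_ne_zero _) this
  have h2 : om N ^ ((k : ℤ) - (l : ℤ)) = 1 := by
    rw [zpow_sub₀ (om_ne_zero N), zpow_natCast, zpow_natCast, h', div_self]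
    exact pow_ne_zero _ (om_ne_zero N)
  have hdvd : (N : ℤ) ∣ ((k : ℤ) - (l : ℤ)) := ((om_prim hN).zpow_eq_one_iff_dvd _).mp h2
  have : ((k : ℤ) - (l : ℤ)) = 0 := by
    refine Int.eq_zero_of_abs_lt_dvd hdvd ?_
    have hk := k.2
    have hl := l.2
    rw [abs_sub_lt_iff]
    constructor <;> [skip; skip] <;> omega
  omega

lemma geom (_hN : 0 < N) {u : ℂ} (hu : u ^ N = 1) :
    ∑ j : Fin N, u ^ (j : ℕ) = if u = 1 then (N : ℂ) else 0 := by
  split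
  · next h => subst h; simp
  · next h =>
    rw [Fin.sum_univ_eq_sum_range (fun n => u ^ n), geom_sum_eq h, hu, sub_self, zero_div]

lemma coe_circRoots_pow (hN : 0 < N) (z : Circle) (k : Fin N) :
    ((circRoots N z k : ℂ)) ^ N = (z : ℂ) := by
  rw [← coe_pow, circRoots_pow hN]

lemma key1 (hN : 0 < N) (z : Circle) (a b : Fin N) :
    ∑ k : Fin N, ((circRoots N z k : ℂ)) ^ (a : ℕ) * (((circRoots N z k : ℂ))⁻¹) ^ (b : ℕ)
      = if a = b then (N : ℂ) else 0 := by
  set r : ℂ := Complex.exp ((((z : ℂ).arg / N : ℝ) : ℂ) * Complex.I) with hr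
  have hrne : r ≠ 0 := Complex.exp_ne_zero _
  set t : ℤ := (a : ℤ) - (b : ℤ) with ht
  have hterm : ∀ k : Fin N,
      ((circRoots N z k : ℂ)) ^ (a : ℕ) * (((circRoots N z k : ℂ))⁻¹) ^ (b : ℕ)
        = (om N ^ t) ^ (k : ℕ) * r ^ t := by
    intro k
    have hc : (circRoots N z k : ℂ) = om N ^ (k : ℕ) * r := coe_circRoots_om N z k
    have hcne : (circRoots N z k : ℂ) ≠ 0 := Circle.coe_ne_zero _
    have h1 : ((circRoots N z k : ℂ)) ^ (a : ℕ) * (((circRoots N z k : ℂ))⁻¹) ^ (b : ℕ)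
        = ((circRoots N z k : ℂ)) ^ t := by
      rw [ht, zpow_sub₀ hcne, zpow_natCast, zpow_natCast, inv_pow, div_eq_mul_inv]
    rw [h1, hc, mul_zpow, ← zpow_natCast (om N) (k : ℕ), ← zpow_mul, mul_comm ((k : ℕ) : ℤ) t,
      zpow_mul, zpow_natCast]
  rw [Finset.sum_congr rfl fun k _ => hterm k, ← Finset.sum_mul]
  have huN : (om N ^ t) ^ N = 1 := by
    rw [← zpow_natCast (om N ^ t) N, ← zpow_mul, mul_comm, zpow_mul, zpow_natCast,
      (om_prim hN).pow_eq_one, one_zpow]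
  rw [geom hN huN]
  by_cases hab : a = b
  · subst hab
    simp [ht, (om_prim hN).zpow_eq_one_iff_dvd]
  · have hu : om N ^ t ≠ 1 := by
      rw [Ne, (om_prim hN).zpow_eq_one_iff_dvd]
      intro hdvd
      have : t = 0 := by
        refine Int.eq_zero_of_abs_lt_dvd hdvd ?_
        have hka := a.2
        have hkb := b.2
        rw [ht, abs_sub_lt_iff]
        omega
      rw [ht] at this
      exact hab (Fin.ext (by omega))
    rw [if_neg hu, if_neg hab, zero_mul]

lemma key2 (hN : 0 < N) (z : Circle) (k l : Fin N) :
    ∑ j : Fin N, (((circRoots N z k : ℂ))⁻¹) ^ (j : ℕ) * ((circRoots N z l : ℂ)) ^ (j : ℕ)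
      = if k = l then (N : ℂ) else 0 := by
  have hterm : ∀ j : Fin N,
      (((circRoots N z k : ℂ))⁻¹) ^ (j : ℕ) * ((circRoots N z l : ℂ)) ^ (j : ℕ)
        = (((circRoots N z k : ℂ))⁻¹ * (circRoots N z l : ℂ)) ^ (j : ℕ) := fun j =>
    (mul_pow _ _ _).symm
  rw [Finset.sum_congr rfl fun j _ => hterm j]
  have huN : (((circRoots N z k : ℂ))⁻¹ * (circRoots N z l : ℂ)) ^ N = 1 := by
    rw [mul_pow, inv_pow, coe_circRoots_pow hN, coe_circRoots_pow hN,
      inv_mul_cancel₀ (Circle.coe_ne_zero z)]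
  rw [geom hN huN]
  have hiff : (((circRoots N z k : ℂ))⁻¹ * (circRoots N z l : ℂ)) = 1 ↔ k = l := by
    rw [inv_mul_eq_one₀ (Circle.coe_ne_zero _), Circle.coe_inj]
    exact ⟨fun h => circRoots_inj hN z h, fun h => by rw [h]⟩
  by_cases hkl : k = l
  · rw [if_pos (hiff.mpr hkl), if_pos hkl]
  · rw [if_neg (fun h => hkl (hiff.mp h)), if_neg hkl]

open scoped Classical in
lemma key4 (hN : 0 < N) (z : Circle) (k : Fin N) :
    ∑ j : Fin N, (((circRoots N (z ^ N) k : ℂ))⁻¹) ^ (j : ℕ) * ((z : ℂ)) ^ (j : ℕ)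
      = if circRoots N (z ^ N) k = z then (N : ℂ) else 0 := by
  have hterm : ∀ j : Fin N,
      (((circRoots N (z ^ N) k : ℂ))⁻¹) ^ (j : ℕ) * ((z : ℂ)) ^ (j : ℕ)
        = (((circRoots N (z ^ N) k : ℂ))⁻¹ * (z : ℂ)) ^ (j : ℕ) := fun j =>
    (mul_pow _ _ _).symm
  rw [Finset.sum_congr rfl fun j _ => hterm j]
  have huN : (((circRoots N (z ^ N) k : ℂ))⁻¹ * (z : ℂ)) ^ N = 1 := by
    rw [mul_pow, inv_pow, coe_circRoots_pow hN, coe_pow,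
      inv_mul_cancel₀ (pow_ne_zero _ (Circle.coe_ne_zero z))]
  rw [geom hN huN]
  have hiff : (((circRoots N (z ^ N) k : ℂ))⁻¹ * (z : ℂ)) = 1 ↔ circRoots N (z ^ N) k = z := by
    rw [inv_mul_eq_one₀ (Circle.coe_ne_zero _), Circle.coe_inj]
  by_cases hkl : circRoots N (z ^ N) k = z
  · rw [if_pos (hiff.mpr hkl), if_pos hkl]
  · rw [if_neg (fun h => hkl (hiff.mp h)), if_neg hkl]

lemma exists_root (hN : 0 < N) (z : Circle) : ∃ k : Fin N, circRoots N (z ^ N) k = z := by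
  classical
  set f : Fin N → ℂ := fun k => (circRoots N (z ^ N) k : ℂ) * ((z : ℂ))⁻¹ with hf
  have hfinj : Function.Injective f := by
    intro k l h
    have : (circRoots N (z ^ N) k : ℂ) = (circRoots N (z ^ N) l : ℂ) :=
      mul_right_cancel₀ (inv_ne_zero (Circle.coe_ne_zero z)) h
    exact circRoots_inj hN _ (Circle.coe_inj.mp this)
  have hmem : ∀ k, f k ∈ Polynomial.nthRootsFinset N (1 : ℂ) := by
    intro k
    rw [Polynomial.mem_nthRootsFinset hN, hf, mul_pow, inv_pow, coe_circRoots_pow hN, coe_pow,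
      mul_inv_cancel₀ (pow_ne_zero _ (Circle.coe_ne_zero z))]
  have himg : Finset.image f Finset.univ = Polynomial.nthRootsFinset N (1 : ℂ) := by
    apply Finset.eq_of_subset_of_card_le
    · intro x hx
      obtain ⟨k, _, rfl⟩ := Finset.mem_image.mp hx
      exact hmem k
    · rw [Finset.card_image_of_injective _ hfinj, Finset.card_univ, Fintype.card_fin,
        (om_prim hN).card_nthRootsFinset]
  have h1 : (1 : ℂ) ∈ Finset.image f Finset.univ := by
    rw [himg]; exact Polynomial.one_mem_nthRootsFinset hN
  obtain ⟨k, _, hk⟩ := Finset.mem_image.mp h1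
  have := hk
  rw [hf] at this
  field_simp at this
  exact ⟨k, Circle.coe_inj.mp this⟩

lemma conj_coe_inv (w : Circle) : (starRingEnd ℂ) ((w : ℂ)⁻¹) = (w : ℂ) := by
  rw [map_inv₀, ← Circle.coe_inv_eq_conj, Circle.coe_inv, inv_inv]

lemma conj_s (N : ℕ) : (starRingEnd ℂ) (1 / (Real.sqrt N : ℂ)) = 1 / (Real.sqrt N : ℂ) := by
  rw [map_div₀, map_one, Complex.conj_ofReal]

lemma hss (hN : 0 < N) :
    (1 / (Real.sqrt N : ℂ)) * (1 / (Real.sqrt N : ℂ)) * (N : ℂ) = 1 := by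
  have h1 : (Real.sqrt N : ℂ) * (Real.sqrt N : ℂ) = (N : ℂ) := by
    rw [← Complex.ofReal_mul, Real.mul_self_sqrt (Nat.cast_nonneg N)]
    norm_cast
  have h2 : (Real.sqrt N : ℂ) ≠ 0 := by
    simp only [Ne, Complex.ofReal_eq_zero]
    exact Real.sqrt_ne_zero'.mpr (by exact_mod_cast hN)
  field_simp
  linear_combination -h1

end Stmt7Aux


open Stmt7Aux

/-- The bijective correspondence between loops `A : 𝕋 → U_N(ℂ)` and QMF systems:
`m_i(z) = (1/√N) Σ_j A_{ij}(z^N) z^j` and `A_{ij}(z) = (1/√N) Σ_{w^N=z} m_i(w) w^{-j}`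
are inverse to each other, and starting from a QMF system the resulting `A` is a.e. unitary. -/
theorem stmt7 (N : ℕ) (hN : 2 ≤ N) :
    (∀ A : Circle → Matrix (Fin N) (Fin N) ℂ, (∀ i j, Measurable fun z => A z i j) →
      (∀ z, A z ∈ Matrix.unitaryGroup (Fin N) ℂ) →
      ∀ (m : Fin N → Circle → ℂ),
        (∀ i z, m i z = (1 / (Real.sqrt N : ℂ)) * ∑ j : Fin N, A (z ^ N) i j * (z : ℂ) ^ (j : ℕ)) →
        ∀ z i j, A z i j
          = (1 / (Real.sqrt N : ℂ)) * rootSum N (fun w => m i w * ((w : ℂ)⁻¹) ^ (j : ℕ)) z) ∧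
    (∀ m : Fin N → Circle → ℂ, (∀ i, Measurable (m i)) → (∀ i, ∃ C, ∀ z, ‖m i z‖ ≤ C) →
      (∀ᵐ z ∂μC, ∀ i j,
        rootSum N (fun w => conj (m i w) * m j w) z = if i = j then 1 else 0) →
      ∀ (A : Fin N → Fin N → Circle → ℂ),
        (∀ i j z, A i j z
          = (1 / (Real.sqrt N : ℂ)) * rootSum N (fun w => m i w * ((w : ℂ)⁻¹) ^ (j : ℕ)) z) →
        (∀ᵐ z ∂μC, (Matrix.of fun i j => A i j z) ∈ Matrix.unitaryGroup (Fin N) ℂ) ∧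
        (∀ z i, m i z
          = (1 / (Real.sqrt N : ℂ)) * ∑ j : Fin N, A i j (z ^ N) * (z : ℂ) ^ (j : ℕ))) := by
  have h0 : 0 < N := by omega
  constructor
  · intro A _ _ m hm z i j
    set s : ℂ := 1 / (Real.sqrt N : ℂ) with hsdef
    symm
    rw [rootSum]
    have step1 : ∀ k : Fin N,
        m i (circRoots N z k) * ((circRoots N z k : ℂ)⁻¹) ^ (j : ℕ)
          = ∑ j' : Fin N, s * (A z i j' *
              ((circRoots N z k : ℂ) ^ (j' : ℕ) * ((circRoots N z k : ℂ)⁻¹) ^ (j : ℕ))) := by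
      intro k
      rw [hm i (circRoots N z k), circRoots_pow h0, mul_assoc, Finset.sum_mul, Finset.mul_sum]
      exact Finset.sum_congr rfl fun j' _ => by ring
    rw [Finset.sum_congr rfl fun k _ => step1 k, Finset.sum_comm]
    have step2 : ∀ j' : Fin N,
        (∑ k : Fin N, s * (A z i j' *
            ((circRoots N z k : ℂ) ^ (j' : ℕ) * ((circRoots N z k : ℂ)⁻¹) ^ (j : ℕ))))
          = if j' = j then s * (A z i j' * (N : ℂ)) else 0 := by
      intro j'
      rw [← Finset.mul_sum, ← Finset.mul_sum, key1 h0 z j' j]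
      split <;> simp
    rw [Finset.sum_congr rfl fun j' _ => step2 j',
      Finset.sum_ite_eq' Finset.univ j (fun j' => s * (A z i j' * (N : ℂ))),
      if_pos (Finset.mem_univ j),
      show s * (s * (A z i j * (N : ℂ))) = s * s * (N : ℂ) * A z i j by ring,
      hsdef, hss h0, one_mul]
  · intro m _ _ hqmf A hA
    classical
    have hAval : ∀ (i j : Fin N) (z : Circle), A i j z
        = (1 / (Real.sqrt N : ℂ)) * ∑ k : Fin N,
            m i (circRoots N z k) * ((circRoots N z k : ℂ)⁻¹) ^ (j : ℕ) := by
      intro i j z; rw [hA, rootSum]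
    set s : ℂ := 1 / (Real.sqrt N : ℂ) with hsdef
    constructor
    · filter_upwards [hqmf] with z hz
      rw [Matrix.mem_unitaryGroup_iff]
      ext i i'
      rw [Matrix.mul_apply, Matrix.one_apply]
      simp only [Matrix.star_apply, Matrix.of_apply, RCLike.star_def]
      have hconj : ∀ (j : Fin N), (starRingEnd ℂ) (A i' j z)
          = s * ∑ l : Fin N,
              (starRingEnd ℂ) (m i' (circRoots N z l)) * ((circRoots N z l : ℂ)) ^ (j : ℕ) := by
        intro j
        rw [hAval, map_mul, map_sum, hsdef, conj_s]
        congr 1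
        refine Finset.sum_congr rfl fun l _ => ?_
        rw [map_mul, map_pow, conj_coe_inv]
      have hterm : ∀ j : Fin N, A i j z * (starRingEnd ℂ) (A i' j z)
          = ∑ k : Fin N, ∑ l : Fin N,
              s * s * (m i (circRoots N z k) * (starRingEnd ℂ) (m i' (circRoots N z l)) *
                (((circRoots N z k : ℂ)⁻¹) ^ (j : ℕ) * ((circRoots N z l : ℂ)) ^ (j : ℕ))) := by
        intro j
        rw [hAval i j z, hconj j,
          show ∀ X Y : ℂ, (s * X) * (s * Y) = s * s * (X * Y) from fun X Y => by ring,
          Finset.sum_mul_sum, Finset.mul_sum]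
        refine Finset.sum_congr rfl fun k _ => ?_
        rw [Finset.mul_sum]
        refine Finset.sum_congr rfl fun l _ => ?_
        ring
      rw [Finset.sum_congr rfl fun j _ => hterm j, Finset.sum_comm,
        Finset.sum_congr rfl fun k _ => Finset.sum_comm]
      have step2 : ∀ k l : Fin N,
          (∑ j : Fin N,
            s * s * (m i (circRoots N z k) * (starRingEnd ℂ) (m i' (circRoots N z l)) *
              (((circRoots N z k : ℂ)⁻¹) ^ (j : ℕ) * ((circRoots N z l : ℂ)) ^ (j : ℕ))))
          = if k = l then s * s * (m i (circRoots N z k) *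
              (starRingEnd ℂ) (m i' (circRoots N z l)) * (N : ℂ)) else 0 := by
        intro k l
        rw [← Finset.mul_sum, ← Finset.mul_sum, key2 h0 z k l]
        split <;> simp
      rw [Finset.sum_congr rfl fun k _ => Finset.sum_congr rfl fun l _ => step2 k l]
      have step3 : ∀ k : Fin N,
          (∑ l : Fin N, if k = l then s * s * (m i (circRoots N z k) *
              (starRingEnd ℂ) (m i' (circRoots N z l)) * (N : ℂ)) else 0)
          = (starRingEnd ℂ) (m i' (circRoots N z k)) * m i (circRoots N z k) := by
        intro k
        rw [Finset.sum_ite_eq Finset.univ k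
          (fun l => s * s * (m i (circRoots N z k) *
            (starRingEnd ℂ) (m i' (circRoots N z l)) * (N : ℂ))),
          if_pos (Finset.mem_univ k),
          show s * s * (m i (circRoots N z k) * (starRingEnd ℂ) (m i' (circRoots N z k)) * (N : ℂ))
            = s * s * (N : ℂ) * ((starRingEnd ℂ) (m i' (circRoots N z k)) * m i (circRoots N z k))
            from by ring, hsdef, hss h0, one_mul]
      rw [Finset.sum_congr rfl fun k _ => step3 k]
      have := hz i' i
      rw [rootSum] at this
      rw [this]
      by_cases h : i = i'
      · rw [if_pos h, if_pos h.symm]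
      · rw [if_neg h, if_neg (fun h' => h h'.symm)]
    · intro z i
      obtain ⟨k0, hk0⟩ := exists_root h0 z
      symm
      have step1 : ∀ j : Fin N, A i j (z ^ N) * (z : ℂ) ^ (j : ℕ)
          = ∑ k : Fin N, s * (m i (circRoots N (z ^ N) k) *
              (((circRoots N (z ^ N) k : ℂ)⁻¹) ^ (j : ℕ) * (z : ℂ) ^ (j : ℕ))) := by
        intro j
        rw [hAval i j (z ^ N), mul_assoc, Finset.sum_mul, Finset.mul_sum]
        exact Finset.sum_congr rfl fun k _ => by ring
      rw [Finset.sum_congr rfl fun j _ => step1 j, Finset.sum_comm]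
      have step2 : ∀ k : Fin N,
          (∑ j : Fin N, s * (m i (circRoots N (z ^ N) k) *
              (((circRoots N (z ^ N) k : ℂ)⁻¹) ^ (j : ℕ) * (z : ℂ) ^ (j : ℕ))))
          = s * (m i (circRoots N (z ^ N) k) *
              (if circRoots N (z ^ N) k = z then (N : ℂ) else 0)) := by
        intro k
        rw [← Finset.mul_sum, ← Finset.mul_sum, key4 h0 z k]
      rw [Finset.sum_congr rfl fun k _ => step2 k,
        Finset.sum_eq_single k0
          (fun k _ hkne => by
            rw [if_neg (fun hck => hkne (circRoots_inj h0 _ (hck.trans hk0.symm))),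
              mul_zero, mul_zero])
          (fun habs => absurd (Finset.mem_univ k0) habs),
        if_pos hk0, hk0,
        show s * (s * (m i z * (N : ℂ))) = s * s * (N : ℂ) * m i z from by ring,
        hsdef, hss h0, one_mul]
end

section
/- Let A : 𝕋 → U_N(ℂ) be measurable and m_i(z) = (1/√N) Σ_j A_{i,j}(z^N) z^j. Then for every z ∈ 𝕋, the N×N matrix with (i,k)-entry m_i(e^{2πik/N} w) — where w is any fixed N-th root of z — is unitary. Equivalently, Σ_{k=0}^{N−1} conj(m_i(e^{2πik/N} w)) m_j(e^{2πik/N} w) = δ_{ij}. -/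
open MeasureTheory Complex
open scoped ComplexConjugate ENNReal

/-- If `A : 𝕋 → U_N(ℂ)` and `m_i(z) = (1/√N) Σ_j A_{ij}(z^N) z^j`, then for every
`z ∈ 𝕋` and every `N`-th root `w` of `z`, the matrix `(m_i(e^{2πik/N} w))_{i,k}` is unitary;
equivalently `Σ_k conj(m_i(e^{2πik/N} w)) m_j(e^{2πik/N} w) = δ_{ij}`. -/
theorem stmt8 (N : ℕ) (hN : 2 ≤ N)
    (A : Circle → Matrix (Fin N) (Fin N) ℂ) (hA_meas : ∀ i j, Measurable fun z => A z i j)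
    (hA_unitary : ∀ z, A z ∈ Matrix.unitaryGroup (Fin N) ℂ)
    (m : Fin N → Circle → ℂ)
    (hm : ∀ i z, m i z = (1 / (Real.sqrt N : ℂ)) * ∑ j : Fin N, A (z ^ N) i j * (z : ℂ) ^ (j : ℕ))
    (w : Circle) :
    ((Matrix.of fun i k : Fin N => m i (Circle.exp (2 * Real.pi * (k : ℝ) / N) * w))
        ∈ Matrix.unitaryGroup (Fin N) ℂ) ∧
    ∀ i j : Fin N, ∑ k : Fin N, conj (m i (Circle.exp (2 * Real.pi * (k : ℝ) / N) * w))
        * m j (Circle.exp (2 * Real.pi * (k : ℝ) / N) * w) = if i = j then 1 else 0 := by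
  have hN0 : (N : ℂ) ≠ 0 := Nat.cast_ne_zero.mpr (by omega)
  set ζ : ℂ := Complex.exp (2 * Real.pi * Complex.I / N) with hζdef
  have hprim : IsPrimitiveRoot ζ N := Complex.isPrimitiveRoot_exp N (by omega)
  set zk : Fin N → Circle := fun k => Circle.exp (2 * Real.pi * (k : ℝ) / N) * w with hzk
  set u : Fin N → ℂ := fun k => ζ ^ (k : ℕ) * (w : ℂ) with hudef
  -- coercion of zk
  have hu : ∀ k, ((zk k : Circle) : ℂ) = u k := by
    intro k
    simp only [hzk, hudef, Circle.coe_mul, Circle.coe_exp]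
    congr 1
    rw [← Complex.exp_nat_mul]
    congr 1
    push_cast
    ring
  -- (zk k)^N = w^N
  have coepow : ∀ (z : Circle) (n : ℕ), ((z ^ n : Circle) : ℂ) = (z : ℂ) ^ n := by
    intro z n
    induction n with
    | zero => simp
    | succ n ih => simp [pow_succ, ih]
  have hpow : ∀ k, (zk k) ^ N = w ^ N := by
    intro k
    apply Subtype.ext
    rw [coepow, coepow, hu]
    simp only [hudef, mul_pow, ← pow_mul]
    rw [mul_comm (k : ℕ) N, pow_mul, hprim.pow_eq_one, one_pow, one_mul]
  set B : Matrix (Fin N) (Fin N) ℂ := A (w ^ N) with hB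
  set c : ℂ := 1 / (Real.sqrt N : ℂ) with hc
  have hm' : ∀ i k, m i (zk k) = c * ∑ a : Fin N, B i a * (u k) ^ (a : ℕ) := by
    intro i k
    rw [hm, hpow, hu]
  have hc2 : conj c * c = 1 / (N : ℂ) := by
    have hcc : conj c = c := by
      simp [hc, map_div₀, Complex.conj_ofReal]
    rw [hcc, hc, div_mul_div_comm, one_mul, ← Complex.ofReal_mul,
      Real.mul_self_sqrt (Nat.cast_nonneg N), Complex.ofReal_natCast]
  have hu0 : ∀ k, u k ≠ 0 := by
    intro k
    exact mul_ne_zero (pow_ne_zero _ (Complex.exp_ne_zero _)) (Circle.coe_ne_zero w)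
  have habs : ∀ k, ‖u k‖ = 1 := by
    intro k
    have hζabs : ‖ζ‖ = 1 := by
      have : ζ = Complex.exp (((2 * Real.pi / N : ℝ) : ℂ) * Complex.I) := by
        rw [hζdef]; congr 1; push_cast; ring
      rw [this, Complex.norm_exp_ofReal_mul_I]
    simp [hudef, norm_mul, norm_pow, hζabs, Circle.norm_coe]
  -- orthogonality
  have orth : ∀ a b : Fin N,
      ∑ k : Fin N, conj ((u k) ^ (a : ℕ)) * (u k) ^ (b : ℕ)
        = if a = b then (N : ℂ) else 0 := by
    intro a b
    have hterm : ∀ k, conj ((u k) ^ (a : ℕ)) * (u k) ^ (b : ℕ)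
        = (u k) ^ ((b : ℤ) - (a : ℤ)) := by
      intro k
      have habs' : ‖(u k) ^ (a : ℕ)‖ = 1 := by
        rw [norm_pow, habs, one_pow]
      rw [← Complex.inv_eq_conj habs', ← zpow_natCast (u k) (a : ℕ),
        ← zpow_natCast (u k) (b : ℕ), ← zpow_neg, ← zpow_add₀ (hu0 k), neg_add_eq_sub]
    simp only [hterm]
    by_cases hab : a = b
    · subst hab
      simp
    · simp only [if_neg hab]
      set mm : ℤ := (b : ℤ) - (a : ℤ) with hmm
      have hsplit : ∀ k : Fin N, (u k) ^ mm = (ζ ^ mm) ^ (k : ℕ) * (w : ℂ) ^ mm := by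
        intro k
        rw [hudef]
        simp only
        rw [mul_zpow, ← zpow_natCast ζ (k : ℕ), ← zpow_mul, mul_comm ((k : ℕ) : ℤ) mm,
          zpow_mul, zpow_natCast]
      simp only [hsplit]
      rw [← Finset.sum_mul]
      have hx1 : ζ ^ mm ≠ 1 := by
        intro h
        obtain ⟨cdvd, hcd⟩ := (hprim.zpow_eq_one_iff_dvd _).mp h
        have := Int.eq_zero_of_dvd_of_natAbs_lt_natAbs ⟨cdvd, hcd⟩ (by
          have ha := a.isLt; have hb := b.isLt; omega)
        have hab' : (a : ℕ) ≠ (b : ℕ) := fun h' => hab (Fin.ext h')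
        omega
      have hxN : (ζ ^ mm) ^ N = 1 := by
        rw [← zpow_natCast, ← zpow_mul, mul_comm, zpow_mul, zpow_natCast, hprim.pow_eq_one,
          one_zpow]
      rw [Fin.sum_univ_eq_sum_range, geom_sum_eq hx1, hxN, sub_self, zero_div, zero_mul]
  -- B unitary consequence
  have hBrow : ∀ i j : Fin N, ∑ a : Fin N, conj (B i a) * B j a = if i = j then 1 else 0 := by
    intro i j
    have h1 : B * star B = 1 := (Matrix.mem_unitaryGroup_iff).mp (hA_unitary (w ^ N))
    have h2 := congrFun (congrFun h1 j) i
    rw [Matrix.mul_apply, Matrix.one_apply] at h2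
    simp only [Matrix.star_apply, RCLike.star_def] at h2
    have h3 : ∑ a : Fin N, conj (B i a) * B j a = if j = i then 1 else 0 := by
      rw [← h2]
      exact Finset.sum_congr rfl fun a _ => mul_comm _ _
    rw [h3]
    by_cases hij : i = j
    · simp [hij]
    · rw [if_neg hij, if_neg (fun h => hij h.symm)]
  -- main part 2
  have part2 : ∀ i j : Fin N, ∑ k : Fin N, conj (m i (zk k)) * m j (zk k)
      = if i = j then 1 else 0 := by
    intro i j
    have expand : ∀ k, conj (m i (zk k)) * m j (zk k)
        = (1 / (N : ℂ)) * ∑ a : Fin N, ∑ b : Fin N,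
            conj (B i a) * B j b * (conj ((u k) ^ (a : ℕ)) * (u k) ^ (b : ℕ)) := by
      intro k
      rw [hm' i k, hm' j k, map_mul, map_sum, mul_mul_mul_comm, hc2, Finset.sum_mul_sum]
      congr 1
      refine Finset.sum_congr rfl fun a _ => Finset.sum_congr rfl fun b _ => ?_
      rw [map_mul]
      ring
    calc ∑ k : Fin N, conj (m i (zk k)) * m j (zk k)
        = (1 / (N : ℂ)) * ∑ a : Fin N, ∑ b : Fin N, conj (B i a) * B j b *
            ∑ k : Fin N, conj ((u k) ^ (a : ℕ)) * (u k) ^ (b : ℕ) := by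
          simp only [expand]
          rw [← Finset.mul_sum]
          congr 1
          rw [Finset.sum_comm]
          refine Finset.sum_congr rfl fun a _ => ?_
          rw [Finset.sum_comm]
          refine Finset.sum_congr rfl fun b _ => ?_
          rw [Finset.mul_sum]
      _ = (1 / (N : ℂ)) * ∑ a : Fin N, conj (B i a) * B j a * N := by
          congr 1
          refine Finset.sum_congr rfl fun a _ => ?_
          simp only [orth]
          rw [Finset.sum_eq_single a]
          · simp
          · intro b _ hb
            rw [if_neg (fun h => hb h.symm), mul_zero]
          · intro h
            exact absurd (Finset.mem_univ a) h
      _ = ∑ a : Fin N, conj (B i a) * B j a := by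
          rw [Finset.mul_sum]
          refine Finset.sum_congr rfl fun a _ => ?_
          field_simp
      _ = if i = j then 1 else 0 := hBrow i j
  refine ⟨?_, part2⟩
  rw [Matrix.mem_unitaryGroup_iff]
  ext i j
  rw [Matrix.mul_apply, Matrix.one_apply]
  simp only [Matrix.star_apply, Matrix.of_apply, RCLike.star_def]
  have := part2 j i
  calc ∑ k : Fin N, m i (zk k) * conj (m j (zk k))
      = ∑ k : Fin N, conj (m j (zk k)) * m i (zk k) :=
        Finset.sum_congr rfl fun k _ => mul_comm _ _
    _ = if j = i then 1 else 0 := part2 j i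
    _ = if i = j then 1 else 0 := by by_cases h : i = j <;> simp [h, eq_comm]
end

section
/- Let m ∈ L^∞(𝕋) with ‖m‖ bounded, and define S f(z) = √N m(z) f(z^N) on L²(𝕋). Then S is an isometry if and only if Σ_{w: w^N = z} |m(w)|² = 1 for a.e. z ∈ 𝕋. -/
open MeasureTheory Complex
open scoped ComplexConjugate ENNReal

namespace Stmt10Aux

open scoped NNReal

instance : μC.IsHaarMeasure := by
  show (Measure.haar : Measure Circle).IsHaarMeasure
  infer_instance

instance : IsFiniteMeasure μC := ⟨isCompact_univ.measure_lt_top⟩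

lemma exp_nat_mul (t : ℝ) (n : ℕ) : Circle.exp (n * t) = Circle.exp t ^ n := by
  induction n with
  | zero => simp
  | succ n ih =>
    rw [pow_succ, ← ih, ← Circle.exp_add]
    congr 1
    push_cast
    ring

lemma nthRoot_pow {N : ℕ} (hN : N ≠ 0) (z : Circle) : nthRoot N z ^ N = z := by
  rw [nthRoot, ← exp_nat_mul]
  have : (N : ℝ) * ((z : ℂ).arg / N) = (z : ℂ).arg := by
    field_simp
  rw [this, Circle.exp_arg]

lemma circRoots_pow {N : ℕ} (hN : N ≠ 0) (z : Circle) (k : Fin N) :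
    circRoots N z k ^ N = z := by
  rw [circRoots, mul_pow, nthRoot_pow hN, ← exp_nat_mul]
  have h1 : (N : ℝ) * (2 * Real.pi * (k : ℝ) / N) = (k : ℕ) * (2 * Real.pi) := by
    field_simp
  rw [h1, exp_nat_mul, Circle.exp_two_pi, one_pow, one_mul]

lemma measurable_circRoots {N : ℕ} (k : Fin N) :
    Measurable (fun z : Circle => circRoots N z k) := by
  have hcoe : Measurable (fun z : Circle => (z : ℂ)) := by
    apply Continuous.measurable
    exact continuous_subtype_val
  unfold circRoots nthRoot
  exact measurable_const.mul
    (Circle.exp.continuous.measurable.comp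
      ((Complex.measurable_arg.comp hcoe).div_const _))

lemma sum_shift {M : Type*} [AddCommMonoid M] {N : ℕ} (hN : N ≠ 0) (h : ℕ → M)
    (hh : h N = h 0) :
    ∑ k ∈ Finset.range N, h (k + 1) = ∑ k ∈ Finset.range N, h k := by
  rcases Nat.exists_eq_succ_of_ne_zero hN with ⟨n, rfl⟩
  rw [Finset.sum_range_succ, Finset.sum_range_succ' (fun k => h k) n, hh]

lemma Phi_periodic {N : ℕ} (hN : N ≠ 0) (G : Circle → ℝ≥0∞) :
    Function.Periodic
      (fun t : ℝ => ∑ k ∈ Finset.range N,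
        G (Circle.exp (2 * Real.pi * (k : ℝ) / N) * Circle.exp t))
      (2 * Real.pi / N) := by
  intro t
  simp only
  have hstep : ∀ k : ℕ,
      Circle.exp (2 * Real.pi * (k : ℝ) / N) * Circle.exp (t + 2 * Real.pi / N)
        = Circle.exp (2 * Real.pi * ((k + 1 : ℕ) : ℝ) / N) * Circle.exp t := by
    intro k
    rw [← Circle.exp_add, ← Circle.exp_add]
    congr 1
    have : (N : ℝ) ≠ 0 := Nat.cast_ne_zero.mpr hN
    push_cast
    field_simp
    ring
  simp_rw [hstep]
  have hNr : (N : ℝ) ≠ 0 := Nat.cast_ne_zero.mpr hN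
  have h1 : 2 * Real.pi * ((N : ℕ) : ℝ) / N = 2 * Real.pi := by field_simp
  have h0 : 2 * Real.pi * ((0 : ℕ) : ℝ) / N = 0 := by simp
  have hend : G (Circle.exp (2 * Real.pi * ((N : ℕ) : ℝ) / N) * Circle.exp t)
      = G (Circle.exp (2 * Real.pi * ((0 : ℕ) : ℝ) / N) * Circle.exp t) := by
    rw [h1, h0, Circle.exp_two_pi, Circle.exp_zero]
  exact sum_shift hN (fun k => G (Circle.exp (2 * Real.pi * (k : ℝ) / N) * Circle.exp t)) hend

lemma sum_circRoots_pow {N : ℕ} (hN : N ≠ 0) (G : Circle → ℝ≥0∞) (w : Circle) :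
    ∑ k : Fin N, G (circRoots N (w ^ N) k)
      = ∑ k ∈ Finset.range N, G (Circle.exp (2 * Real.pi * (k : ℝ) / N) * w) := by
  have hNr : (N : ℝ) ≠ 0 := Nat.cast_ne_zero.mpr hN
  have h1 : Circle.exp (((w ^ N : Circle) : ℂ).arg) = Circle.exp ((N : ℝ) * (w : ℂ).arg) := by
    rw [Circle.exp_arg, exp_nat_mul, Circle.exp_arg]
  obtain ⟨j, hj⟩ := Circle.exp_eq_exp.mp h1
  have harg : ((w ^ N : Circle) : ℂ).arg / N = (w : ℂ).arg + (j : ℝ) * (2 * Real.pi / N) := by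
    rw [hj]
    field_simp
  have hsum : ∑ k : Fin N, G (circRoots N (w ^ N) k)
      = ∑ k ∈ Finset.range N,
          G (Circle.exp (2 * Real.pi * (k : ℝ) / N)
            * Circle.exp ((w : ℂ).arg + (j : ℝ) * (2 * Real.pi / N))) := by
    simp only [circRoots, nthRoot]
    rw [harg]
    exact Fin.sum_univ_eq_sum_range (fun k : ℕ =>
      G (Circle.exp (2 * Real.pi * (k : ℝ) / N)
        * Circle.exp ((w : ℂ).arg + (j : ℝ) * (2 * Real.pi / N)))) N
  rw [hsum]
  have := (Phi_periodic hN G).int_mul j ((w : ℂ).arg)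
  beta_reduce at this
  calc ∑ k ∈ Finset.range N,
          G (Circle.exp (2 * Real.pi * (k : ℝ) / N)
            * Circle.exp ((w : ℂ).arg + (j : ℝ) * (2 * Real.pi / N)))
      = ∑ k ∈ Finset.range N,
          G (Circle.exp (2 * Real.pi * (k : ℝ) / N) * Circle.exp ((w : ℂ).arg)) := this
    _ = ∑ k ∈ Finset.range N, G (Circle.exp (2 * Real.pi * (k : ℝ) / N) * w) := by
        rw [Circle.exp_arg]

lemma powPreserving {N : ℕ} (hN : N ≠ 0) :
    MeasurePreserving (fun w : Circle => w ^ N) μC μC := by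
  have hsurj : Function.Surjective (fun w : Circle => w ^ N) :=
    fun z => ⟨nthRoot N z, nthRoot_pow hN z⟩
  exact MonoidHom.measurePreserving (μ := μC) (ν := μC) (f := powMonoidHom N)
    (continuous_pow N) hsurj rfl

lemma lemmaA {N : ℕ} (hN : N ≠ 0) (F : Circle → ℝ≥0∞) (hF : Measurable F) :
    ∫⁻ z, ∑ k : Fin N, F (circRoots N z k) ∂μC = N * ∫⁻ z, F z ∂μC := by
  have hmeas : Measurable fun z : Circle => ∑ k : Fin N, F (circRoots N z k) :=
    Finset.measurable_sum _ fun k _ => hF.comp (measurable_circRoots k)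
  calc ∫⁻ z, ∑ k : Fin N, F (circRoots N z k) ∂μC
      = ∫⁻ w, ∑ k : Fin N, F (circRoots N (w ^ N) k) ∂μC :=
        ((powPreserving hN).lintegral_comp hmeas).symm
    _ = ∫⁻ w, ∑ k ∈ Finset.range N,
          F (Circle.exp (2 * Real.pi * (k : ℝ) / N) * w) ∂μC :=
        lintegral_congr fun w => sum_circRoots_pow hN F w
    _ = ∑ k ∈ Finset.range N, ∫⁻ w,
          F (Circle.exp (2 * Real.pi * (k : ℝ) / N) * w) ∂μC :=
        lintegral_finset_sum _ fun k _ => hF.comp (measurable_const_mul _)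
    _ = ∑ k ∈ Finset.range N, ∫⁻ w, F w ∂μC :=
        Finset.sum_congr rfl fun k _ => lintegral_mul_left_eq_self F _
    _ = N * ∫⁻ z, F z ∂μC := by
        rw [Finset.sum_const, Finset.card_range, nsmul_eq_mul]

end Stmt10Aux

open Stmt10Aux
open scoped NNReal

/-- `S f(z) = √N m(z) f(z^N)` is an isometry of `L²(𝕋)` if and only if
`Σ_{w^N=z} |m(w)|² = 1` for a.e. `z`. -/
theorem stmt10 (N : ℕ) (hN : 2 ≤ N) (m : Circle → ℂ)
    (hm_meas : Measurable m) (hm_bdd : ∃ C, ∀ z, ‖m z‖ ≤ C)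
    (S : Lp ℂ 2 μC →L[ℂ] Lp ℂ 2 μC)
    (hS : ∀ f : Lp ℂ 2 μC,
      (S f : Circle → ℂ) =ᵐ[μC] fun z => (Real.sqrt N : ℂ) * m z * f (z ^ N)) :
    (∀ f : Lp ℂ 2 μC, ‖S f‖ = ‖f‖) ↔
      (∀ᵐ z ∂μC, ∑ k : Fin N, ‖m (circRoots N z k)‖ ^ 2 = 1) := by
  have hN0 : N ≠ 0 := by omega
  set h : Circle → ℝ≥0∞ :=
    fun z => ∑ k : Fin N, ((‖m (circRoots N z k)‖₊ : ℝ≥0∞)) ^ 2 with hh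
  have h_meas : Measurable h :=
    Finset.measurable_sum _ fun k _ =>
      ((hm_meas.comp (measurable_circRoots k)).nnnorm.coe_nnreal_ennreal).pow_const 2
  -- pointwise equivalence between the ℝ≥0∞ sum and the real sum
  have hpt : ∀ z, (h z = 1 ↔ ∑ k : Fin N, ‖m (circRoots N z k)‖ ^ 2 = 1) := by
    intro z
    have hz : h z = ENNReal.ofReal (∑ k : Fin N, ‖m (circRoots N z k)‖ ^ 2) := by
      rw [ENNReal.ofReal_sum_of_nonneg (fun k _ => by positivity)]
      refine Finset.sum_congr rfl fun k _ => ?_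
      rw [ENNReal.ofReal_pow (norm_nonneg _), ofReal_norm, enorm_eq_nnnorm]
    rw [hz, ← ENNReal.ofReal_one,
      ENNReal.ofReal_eq_ofReal_iff (by positivity) zero_le_one]
  -- norms vs. quadratic lintegrals
  have hJ : ∀ u : Lp ℂ 2 μC,
      eLpNorm (u : Circle → ℂ) 2 μC
        = (∫⁻ z, ((‖(u : Circle → ℂ) z‖₊ : ℝ≥0∞)) ^ 2 ∂μC) ^ (1 / 2 : ℝ) := by
    intro u
    rw [eLpNorm_eq_lintegral_rpow_enorm_toReal two_ne_zero ENNReal.ofNat_ne_top,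
      ENNReal.toReal_ofNat]
    congr 1
    refine lintegral_congr fun z => ?_
    rw [← ENNReal.rpow_natCast]
    norm_num [enorm_eq_nnnorm]
  have hnorm_iff : ∀ u v : Lp ℂ 2 μC, (‖u‖ = ‖v‖ ↔
      ∫⁻ z, ((‖(u : Circle → ℂ) z‖₊ : ℝ≥0∞)) ^ 2 ∂μC
        = ∫⁻ z, ((‖(v : Circle → ℂ) z‖₊ : ℝ≥0∞)) ^ 2 ∂μC) := by
    intro u v
    rw [Lp.norm_def, Lp.norm_def,
      ENNReal.toReal_eq_toReal_iff' (Lp.eLpNorm_ne_top u) (Lp.eLpNorm_ne_top v), hJ u, hJ v]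
    constructor
    · intro H
      exact ENNReal.rpow_left_injective (by norm_num) H
    · intro H
      rw [H]
  -- the key identity
  have key : ∀ f : Lp ℂ 2 μC,
      ∫⁻ z, ((‖(S f : Circle → ℂ) z‖₊ : ℝ≥0∞)) ^ 2 ∂μC
        = ∫⁻ z, h z * ((‖(f : Circle → ℂ) z‖₊ : ℝ≥0∞)) ^ 2 ∂μC := by
    intro f
    obtain ⟨g, hg_meas, hg_ae⟩ : ∃ g : Circle → ℂ,
        Measurable g ∧ (f : Circle → ℂ) =ᵐ[μC] g := by
      have hf := (Lp.aestronglyMeasurable f).aemeasurable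
      exact ⟨hf.mk _, hf.measurable_mk, hf.ae_eq_mk⟩
    have hcomp : (fun w : Circle => (f : Circle → ℂ) (w ^ N))
        =ᵐ[μC] fun w => g (w ^ N) :=
      (powPreserving hN0).quasiMeasurePreserving.ae_eq_comp hg_ae
    have hsqrt : ((‖(Real.sqrt N : ℂ)‖₊ : ℝ≥0∞)) ^ 2 = (N : ℝ≥0∞) := by
      have h1 : (‖(Real.sqrt N : ℂ)‖₊ : ℝ≥0) ^ 2 = (N : ℝ≥0) := by
        apply NNReal.coe_injective
        push_cast
        rw [Complex.norm_real, Real.norm_eq_abs,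
          _root_.abs_of_nonneg (Real.sqrt_nonneg _), Real.sq_sqrt (by positivity)]
      rw [← ENNReal.coe_pow, h1, ENNReal.coe_natCast]
    have hpowm : Measurable (fun w : Circle => w ^ N) := (continuous_pow N).measurable
    set F : Circle → ℝ≥0∞ :=
      fun w => ((‖m w‖₊ : ℝ≥0∞)) ^ 2 * ((‖g (w ^ N)‖₊ : ℝ≥0∞)) ^ 2 with hF
    have hF_meas : Measurable F :=
      ((hm_meas.nnnorm.coe_nnreal_ennreal).pow_const 2).mul
        (((hg_meas.comp hpowm).nnnorm.coe_nnreal_ennreal).pow_const 2)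
    calc ∫⁻ z, ((‖(S f : Circle → ℂ) z‖₊ : ℝ≥0∞)) ^ 2 ∂μC
        = ∫⁻ z, (N : ℝ≥0∞) * F z ∂μC := by
          refine lintegral_congr_ae ?_
          filter_upwards [hS f, hcomp] with z hz hz2
          rw [hz]
          simp only [F]
          rw [← hz2]
          simp only [nnnorm_mul, ENNReal.coe_mul, mul_pow, hsqrt]
          ring
      _ = (N : ℝ≥0∞) * ∫⁻ z, F z ∂μC := lintegral_const_mul _ hF_meas
      _ = ∫⁻ z, ∑ k : Fin N, F (circRoots N z k) ∂μC := (lemmaA hN0 F hF_meas).symm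
      _ = ∫⁻ z, h z * ((‖g z‖₊ : ℝ≥0∞)) ^ 2 ∂μC := by
          refine lintegral_congr fun z => ?_
          simp only [F, hh]
          rw [Finset.sum_mul]
          refine Finset.sum_congr rfl fun k _ => ?_
          rw [circRoots_pow hN0]
      _ = ∫⁻ z, h z * ((‖(f : Circle → ℂ) z‖₊ : ℝ≥0∞)) ^ 2 ∂μC := by
          refine lintegral_congr_ae ?_
          filter_upwards [hg_ae] with z hz
          rw [hz]
  -- put things together
  have main_iff : (∀ f : Lp ℂ 2 μC, ‖S f‖ = ‖f‖) ↔
      (∀ f : Lp ℂ 2 μC,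
        ∫⁻ z, h z * ((‖(f : Circle → ℂ) z‖₊ : ℝ≥0∞)) ^ 2 ∂μC
          = ∫⁻ z, ((‖(f : Circle → ℂ) z‖₊ : ℝ≥0∞)) ^ 2 ∂μC) := by
    constructor
    · intro H f
      have := (hnorm_iff (S f) f).mp (H f)
      rw [key f] at this
      exact this
    · intro H f
      refine (hnorm_iff (S f) f).mpr ?_
      rw [key f]
      exact H f
  rw [main_iff]
  constructor
  · intro H
    have hset : ∀ s, MeasurableSet s → μC s < ∞ →
        ∫⁻ z in s, h z ∂μC = ∫⁻ z in s, (1 : ℝ≥0∞) ∂μC := by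
      intro s hs _
      set f : Lp ℂ 2 μC := indicatorConstLp 2 hs (measure_ne_top μC s) (1 : ℂ) with hf
      have hf_ae : (f : Circle → ℂ) =ᵐ[μC] s.indicator fun _ => (1 : ℂ) :=
        indicatorConstLp_coeFn
      have hind : ∀ z : Circle,
          ((‖s.indicator (fun _ => (1 : ℂ)) z‖₊ : ℝ≥0∞)) ^ 2
            = s.indicator (fun _ => (1 : ℝ≥0∞)) z := by
        intro z
        by_cases hz : z ∈ s
        · simp [Set.indicator_of_mem hz]
        · simp [Set.indicator_of_notMem hz]
      have h1 : ∫⁻ z, h z * ((‖(f : Circle → ℂ) z‖₊ : ℝ≥0∞)) ^ 2 ∂μC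
          = ∫⁻ z in s, h z ∂μC := by
        rw [← lintegral_indicator hs]
        refine lintegral_congr_ae ?_
        filter_upwards [hf_ae] with z hz
        rw [hz, hind z]
        by_cases hzs : z ∈ s
        · simp [Set.indicator_of_mem hzs]
        · simp [Set.indicator_of_notMem hzs]
      have h2 : ∫⁻ z, ((‖(f : Circle → ℂ) z‖₊ : ℝ≥0∞)) ^ 2 ∂μC
          = ∫⁻ z in s, (1 : ℝ≥0∞) ∂μC := by
        rw [← lintegral_indicator hs]
        refine lintegral_congr_ae ?_
        filter_upwards [hf_ae] with z hz
        rw [hz, hind z]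
      rw [← h1, ← h2]
      exact H f
    have hae : h =ᵐ[μC] fun _ => (1 : ℝ≥0∞) :=
      ae_eq_of_forall_setLIntegral_eq_of_sigmaFinite h_meas measurable_const hset
    filter_upwards [hae] with z hz using (hpt z).mp hz
  · intro H f
    have h1 : h =ᵐ[μC] fun _ => (1 : ℝ≥0∞) := by
      filter_upwards [H] with z hz using (hpt z).mpr hz
    refine lintegral_congr_ae ?_
    filter_upwards [h1] with z hz
    rw [hz, one_mul]
end

section
/- Let m₀ : 𝕋 → ℂ be measurable and bounded with Σ_{w: w^N = z} |m₀(w)|² = 1 for a.e. z. Then there exist measurable bounded functions m₁, …, m_{N−1} : 𝕋 → ℂ such that the N×N matrix (m_i(w_j(z)))_{i,j}, with w_j(z) the N-th roots of z, is unitary for a.e. z ∈ 𝕋. -/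
open MeasureTheory Complex
open scoped ComplexConjugate ENNReal

lemma circleExp_pow (t : ℝ) (n : ℕ) : (Circle.exp t) ^ n = Circle.exp (n * t) := by
  induction n with
  | zero => simp
  | succ k ih => rw [pow_succ, ih, ← Circle.exp_add]; congr 1; push_cast; ring

lemma circRoots_pow (N : ℕ) (hN : 0 < N) (z : Circle) (k : Fin N) :
    (circRoots N z k) ^ N = z := by
  have hN' : (N : ℝ) ≠ 0 := Nat.cast_ne_zero.mpr hN.ne'
  rw [circRoots, nthRoot, mul_pow, circleExp_pow, circleExp_pow]
  rw [show (N : ℝ) * (2 * Real.pi * (k : ℝ) / N) = (k : ℤ) * (2 * Real.pi) by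
    push_cast; field_simp]
  rw [show (N : ℝ) * ((z : ℂ).arg / N) = (z : ℂ).arg by field_simp]
  rw [Circle.exp_int_mul_two_pi, one_mul, Circle.exp_arg]

lemma circRoots_inj (N : ℕ) (z : Circle) {j k : Fin N}
    (h : circRoots N z j = circRoots N z k) : j = k := by
  have hN : 0 < N := j.pos
  have hN' : (N : ℝ) ≠ 0 := Nat.cast_ne_zero.mpr hN.ne'
  have h2 : Circle.exp (2 * Real.pi * (j : ℝ) / N) = Circle.exp (2 * Real.pi * (k : ℝ) / N) :=
    mul_right_cancel h
  obtain ⟨m, hm⟩ := Circle.exp_eq_exp.mp h2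
  have hπ : (0:ℝ) < Real.pi := Real.pi_pos
  have hj : ((j:ℕ) : ℝ) = ((k:ℕ) : ℝ) + m * N := by
    field_simp at hm
    nlinarith [hm]
  have hjZ : ((j:ℕ) : ℤ) = ((k:ℕ) : ℤ) + m * N := by exact_mod_cast hj
  have hjN : ((j:ℕ) : ℤ) < N := by exact_mod_cast j.isLt
  have hkN : ((k:ℕ) : ℤ) < N := by exact_mod_cast k.isLt
  have hj0 : (0:ℤ) ≤ (j:ℕ) := Int.ofNat_nonneg _
  have hk0 : (0:ℤ) ≤ (k:ℕ) := Int.ofNat_nonneg _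
  have hNZ : (0:ℤ) < N := by exact_mod_cast hN
  have hx1 : m * (N:ℤ) < N := by linarith
  have hx2 : -(N:ℤ) < m * N := by linarith
  have hm0 : m = 0 := by
    by_contra hne
    rcases lt_or_gt_of_ne hne with hlt | hgt
    · have : m ≤ -1 := by omega
      nlinarith
    · have : 1 ≤ m := by omega
      nlinarith
  subst hm0
  simp only [zero_mul, add_zero] at hjZ
  exact Fin.ext (by exact_mod_cast hjZ)

lemma exists_rootIdx (N : ℕ) (hN : 0 < N) (w : Circle) :
    ∃ k : Fin N, circRoots N (w ^ N) k = w := by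
  have hN' : (N : ℝ) ≠ 0 := Nat.cast_ne_zero.mpr hN.ne'
  have hNZ : ((N:ℤ)) ≠ 0 := by exact_mod_cast hN.ne'
  set z := w ^ N with hz
  have hroot : (nthRoot N z) ^ N = z := by
    rw [nthRoot, circleExp_pow, show (N : ℝ) * ((z:ℂ).arg / N) = (z:ℂ).arg by field_simp,
      Circle.exp_arg]
  set ζ := w * (nthRoot N z)⁻¹ with hζ
  have hζN : ζ ^ N = 1 := by
    rw [hζ, mul_pow, inv_pow, hroot, hz, mul_inv_cancel]
  have hζe : Circle.exp ((ζ:ℂ).arg) = ζ := Circle.exp_arg ζ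
  have h1 : Circle.exp (N * (ζ:ℂ).arg) = 1 := by
    rw [← circleExp_pow, hζe, hζN]
  obtain ⟨m, hm⟩ := Circle.exp_eq_one.mp h1
  have h0 : 0 ≤ m % N := Int.emod_nonneg m hNZ
  have hlt : m % N < N := Int.emod_lt_of_pos m (by exact_mod_cast hN)
  refine ⟨⟨(m % N).toNat, by omega⟩, ?_⟩
  rw [circRoots]
  have hk : (((m % N).toNat : ℕ) : ℝ) = ((m % N : ℤ) : ℝ) := by
    norm_cast
    omega
  have harg : (ζ:ℂ).arg = m * (2 * Real.pi) / N := by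
    field_simp
    linarith [hm]
  have hde := Int.mul_ediv_add_emod m N
  have hdiv : (m % N : ℤ) = m - N * (m / N) := by linarith [hde]
  have hexp : Circle.exp (2 * Real.pi * ((m % N).toNat : ℝ) / N) = ζ := by
    rw [hk, ← hζe, harg, Circle.exp_eq_exp]
    refine ⟨-(m / N), ?_⟩
    rw [hdiv]
    push_cast
    field_simp
    ring
  rw [hexp, hζ, inv_mul_cancel_right]

noncomputable def rootIdx (N : ℕ) (hN : 0 < N) (w : Circle) : Fin N :=
  (exists_rootIdx N hN w).choose

lemma rootIdx_spec (N : ℕ) (hN : 0 < N) (w : Circle) :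
    circRoots N (w ^ N) (rootIdx N hN w) = w :=
  (exists_rootIdx N hN w).choose_spec

lemma rootIdx_circRoots (N : ℕ) (hN : 0 < N) (z : Circle) (j : Fin N) :
    rootIdx N hN (circRoots N z j) = j := by
  have h1 := rootIdx_spec N hN (circRoots N z j)
  rw [circRoots_pow N hN z j] at h1
  exact circRoots_inj N z h1

lemma measurable_coe_circle : Measurable (fun z : Circle => (z : ℂ)) := by
  apply Continuous.measurable; exact continuous_subtype_val

lemma measurable_circleExp : Measurable (Circle.exp : ℝ → Circle) := by
  apply Continuous.measurable; exact Circle.exp.continuous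

lemma measurable_mul_circle : Measurable (fun p : Circle × Circle => p.1 * p.2) := by
  apply Continuous.measurable; exact continuous_mul

lemma measurable_circRoots (N : ℕ) (k : Fin N) : Measurable (fun z => circRoots N z k) := by
  unfold circRoots
  exact measurable_mul_circle.comp (measurable_const.prodMk (measurable_nthRoot N))

lemma measurable_pow_n (N : ℕ) : Measurable (fun w : Circle => w ^ N) := by
  apply Continuous.measurable; exact continuous_pow N

lemma measurable_rootIdx (N : ℕ) (hN : 0 < N) : Measurable (rootIdx N hN) := by
  apply measurable_to_countable'
  intro j
  have : rootIdx N hN ⁻¹' {j} = {w | circRoots N (w ^ N) j = w} := by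
    ext w
    simp only [Set.mem_preimage, Set.mem_singleton_iff, Set.mem_setOf_eq]
    constructor
    · rintro rfl; exact rootIdx_spec N hN w
    · intro h
      have h1 := rootIdx_spec N hN w
      exact circRoots_inj N _ (h1.trans h.symm)
  rw [this]
  have hf := (measurable_circRoots N j).comp (measurable_pow_n N)
  exact hf.stronglyMeasurable.measurableSet_eq_fun stronglyMeasurable_id

variable {N : ℕ} [NeZero N]

noncomputable def phz (v : Fin N → ℂ) : ℂ := Complex.exp (((v 0).arg : ℂ) * Complex.I)

noncomputable def uv (v : Fin N → ℂ) : Fin N → ℂ := fun i => v i - if i = 0 then phz v else 0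

noncomputable def cv (v : Fin N → ℂ) : ℝ := ∑ i, Complex.normSq (uv v i)

noncomputable def Amat (v : Fin N → ℂ) : Matrix (Fin N) (Fin N) ℂ :=
  if uv v = 0 then phz v • 1
  else phz v • ((1 : Matrix (Fin N) (Fin N) ℂ)
    - ((2 : ℂ) / (cv v : ℂ)) • Matrix.of (fun i j => uv v i * conj (uv v j)))

lemma phz_abs (v : Fin N → ℂ) : ‖phz v‖ = 1 := by
  rw [phz]; exact Complex.norm_exp_ofReal_mul_I _

lemma phz_conj_mul (v : Fin N → ℂ) : conj (phz v) * phz v = 1 := by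
  rw [← Complex.normSq_eq_conj_mul_self, ← Complex.sq_norm, phz_abs]
  norm_num

lemma cv_nonneg (v : Fin N → ℂ) : 0 ≤ cv v :=
  Finset.sum_nonneg fun i _ => Complex.normSq_nonneg _

lemma cv_ne_zero (v : Fin N → ℂ) (h : uv v ≠ 0) : cv v ≠ 0 := by
  intro hc
  apply h
  funext i
  have h1 : ∀ i ∈ Finset.univ, (0:ℝ) ≤ Complex.normSq (uv v i) :=
    fun i _ => Complex.normSq_nonneg _
  have := (Finset.sum_eq_zero_iff_of_nonneg h1).mp hc i (Finset.mem_univ i)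
  exact Complex.normSq_eq_zero.mp this

lemma Amat_unitary (v : Fin N → ℂ) : Amat v ∈ Matrix.unitaryGroup (Fin N) ℂ := by
  apply Matrix.mem_unitaryGroup_iff.mpr
  rw [Amat]
  split_ifs with h
  · rw [star_smul, star_one, Matrix.smul_mul, Matrix.mul_smul, smul_smul, Matrix.one_mul,
      star_def, mul_comm, phz_conj_mul, one_smul]
  · set u := uv v with hu
    set c := cv v with hc
    have hc0 : c ≠ 0 := cv_ne_zero v h
    have hcC : (c:ℂ) ≠ 0 := by exact_mod_cast hc0
    set r : ℂ := (2:ℂ)/(c:ℂ) with hr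
    set P : Matrix (Fin N) (Fin N) ℂ := Matrix.of (fun i j => u i * conj (u j)) with hP
    have hPstar : star P = P := by
      ext i j
      simp only [Matrix.star_apply, hP, Matrix.of_apply, star_mul', star_def,
        Complex.conj_conj]
      ring
    have hrstar : star r = r := by
      simp [hr, star_def, map_div₀, Complex.conj_ofReal]
    have hH : star ((1:Matrix (Fin N) (Fin N) ℂ) - r • P)
        = (1:Matrix (Fin N) (Fin N) ℂ) - r • P := by
      rw [star_sub, star_one, star_smul, hPstar, hrstar]
    have hPP : P * P = (c:ℂ) • P := by
      ext i j
      simp only [Matrix.mul_apply, hP, Matrix.of_apply, Matrix.smul_apply, smul_eq_mul]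
      have key : ∀ k, (u i * conj (u k)) * (u k * conj (u j))
          = ((Complex.normSq (u k) : ℂ)) * (u i * conj (u j)) := by
        intro k
        rw [show u i * conj (u k) * (u k * conj (u j))
            = (u k * conj (u k)) * (u i * conj (u j)) by ring, Complex.mul_conj]
      rw [Finset.sum_congr rfl (fun k _ => key k), ← Finset.sum_mul]
      have hsum : (∑ k, (Complex.normSq (u k) : ℂ)) = ((c:ℝ):ℂ) := by
        rw [hc]
        unfold cv
        push_cast
        rfl
      rw [hsum]
    have hscal : r * r * (c:ℂ) = r + r := by
      rw [hr]; field_simp; ring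
    have hHH : ((1:Matrix (Fin N) (Fin N) ℂ) - r • P) * ((1:Matrix (Fin N) (Fin N) ℂ) - r • P)
        = 1 := by
      set Q : Matrix (Fin N) (Fin N) ℂ := r • P with hQ
      have expand : ((1:Matrix (Fin N) (Fin N) ℂ) - Q) * ((1:Matrix (Fin N) (Fin N) ℂ) - Q)
          = 1 - Q - Q + Q * Q := by noncomm_ring
      have hQQ : Q * Q = (r + r) • P := by
        rw [hQ, Matrix.smul_mul, Matrix.mul_smul, smul_smul, hPP, smul_smul, hscal]
      rw [expand, hQQ, hQ, add_smul]
      abel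
    rw [star_smul, hH, Matrix.smul_mul, Matrix.mul_smul, smul_smul, hHH,
      star_def, mul_comm, phz_conj_mul, one_smul]

lemma Amat_star_mul (v : Fin N → ℂ) : star (Amat v) * Amat v = 1 :=
  Matrix.mem_unitaryGroup_iff'.mp (Amat_unitary v)

lemma Amat_apply_eq (v : Fin N → ℂ) (h : uv v = 0) (i j : Fin N) :
    Amat v i j = if i = j then phz v else 0 := by
  rw [Amat, if_pos h]
  simp only [Matrix.smul_apply, Matrix.one_apply, smul_eq_mul]
  split_ifs <;> simp

lemma Amat_apply_ne (v : Fin N → ℂ) (h : ¬ uv v = 0) (i j : Fin N) :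
    Amat v i j = phz v * ((if i = j then 1 else 0)
      - ((2:ℂ)/(cv v : ℂ)) * (uv v i * conj (uv v j))) := by
  rw [Amat, if_neg h]
  simp only [Matrix.smul_apply, Matrix.sub_apply, Matrix.one_apply, Matrix.smul_apply,
    Matrix.of_apply, smul_eq_mul]

lemma normSq_le_cv (v : Fin N → ℂ) (i : Fin N) : Complex.normSq (uv v i) ≤ cv v :=
  Finset.single_le_sum (f := fun k => Complex.normSq (uv v k))
    (fun k _ => Complex.normSq_nonneg _) (Finset.mem_univ i)

lemma Amat_bound (v : Fin N → ℂ) (i j : Fin N) : ‖Amat v i j‖ ≤ 3 := by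
  by_cases h : uv v = 0
  · rw [Amat_apply_eq v h]
    split_ifs
    · rw [phz_abs]; norm_num
    · simp
  · rw [Amat_apply_ne v h]
    have hc0 : cv v ≠ 0 := cv_ne_zero v h
    have hcpos : 0 < cv v := lt_of_le_of_ne (cv_nonneg v) (Ne.symm hc0)
    rw [norm_mul, phz_abs, one_mul]
    have h1 : ‖(if i = j then (1:ℂ) else 0)‖ ≤ 1 := by split_ifs <;> simp
    have h2 : ‖((2:ℂ)/(cv v : ℂ)) * (uv v i * conj (uv v j))‖ ≤ 2 := by
      rw [norm_mul, norm_mul, norm_div]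
      have hai : ‖uv v i‖ ^ 2 ≤ cv v := by
        rw [Complex.sq_norm]; exact normSq_le_cv v i
      have haj : ‖uv v j‖ ^ 2 ≤ cv v := by
        rw [Complex.sq_norm]; exact normSq_le_cv v j
      have hprod : ‖uv v i‖ * ‖uv v j‖ ≤ cv v := by
        nlinarith [norm_nonneg (uv v i), norm_nonneg (uv v j), hcpos]
      have : ‖((cv v : ℝ) : ℂ)‖ = cv v := by
        rw [Complex.norm_real, Real.norm_of_nonneg (cv_nonneg v)]
      rw [this]
      have : ‖(2:ℂ)‖ = 2 := by norm_num
      rw [this, Complex.norm_conj]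
      rw [div_mul_eq_mul_div, div_le_iff₀ hcpos]
      nlinarith
    calc ‖(if i = j then (1:ℂ) else 0) - ((2:ℂ)/(cv v : ℂ)) * (uv v i * conj (uv v j))‖
        ≤ ‖(if i = j then (1:ℂ) else 0)‖ + ‖((2:ℂ)/(cv v : ℂ)) * (uv v i * conj (uv v j))‖ :=
          norm_sub_le _ _
      _ ≤ 1 + 2 := add_le_add h1 h2
      _ = 3 := by norm_num

lemma Amat_col (v : Fin N → ℂ) (hv : ∑ i, Complex.normSq (v i) = 1) (j : Fin N) :
    Amat v j 0 = v j := by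
  by_cases h : uv v = 0
  · rw [Amat_apply_eq v h]
    have hz : uv v j = 0 := congrFun h j
    have hz2 : v j - (if j = 0 then phz v else 0) = 0 := hz
    exact (sub_eq_zero.mp hz2).symm
  · set a : ℝ := ‖v 0‖ with ha
    have hva : v 0 = (a:ℂ) * phz v := by
      rw [ha, phz]
      exact (Complex.norm_mul_exp_arg_mul_I (v 0)).symm
    have hu0 : uv v 0 = ((a:ℂ) - 1) * phz v := by
      have huv : uv v 0 = v 0 - phz v := by simp [uv]
      rw [huv, hva]; ring
    have hφn : Complex.normSq (phz v) = 1 := by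
      rw [← Complex.sq_norm, phz_abs]; norm_num
    have hcv : cv v = 2 - 2*a := by
      have key : ∀ i, Complex.normSq (uv v i) = Complex.normSq (v i)
          + (if i = 0 then (Complex.normSq (uv v 0) - Complex.normSq (v 0)) else 0) := by
        intro i
        by_cases hi : i = 0
        · subst hi; simp
        · simp only [uv, if_neg hi, sub_zero, add_zero, if_neg hi]
      have hsplit : cv v = (∑ i, Complex.normSq (v i))
          + (Complex.normSq (uv v 0) - Complex.normSq (v 0)) := by
        rw [cv, Finset.sum_congr rfl (fun i _ => key i), Finset.sum_add_distrib,
          Finset.sum_ite_eq' Finset.univ 0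
            (fun _ => Complex.normSq (uv v 0) - Complex.normSq (v 0))]
        simp
      rw [hsplit, hv, hu0]
      rw [Complex.normSq_mul, hφn, mul_one]
      have : ((a:ℂ) - 1) = ((a - 1 : ℝ) : ℂ) := by push_cast; ring
      rw [this, Complex.normSq_ofReal]
      have : Complex.normSq (v 0) = a^2 := by rw [← Complex.sq_norm, ha]
      rw [this]
      ring
    have hc0 : cv v ≠ 0 := cv_ne_zero v h
    have hφ : phz v * conj (phz v) = 1 := by rw [mul_comm]; exact phz_conj_mul v
    rw [Amat_apply_ne v h]
    have hconj : conj (uv v 0) = ((a:ℂ) - 1) * conj (phz v) := by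
      rw [hu0, map_mul]
      congr 1
      rw [map_sub, Complex.conj_ofReal, map_one]
    have hfact : ((2:ℂ)/(cv v : ℂ)) * ((a:ℂ) - 1) = -1 := by
      have hne : ((2:ℂ) - 2*(a:ℂ)) ≠ 0 := by
        have h1 : ((2 - 2*a : ℝ) : ℂ) ≠ 0 := by
          intro hz
          apply hc0
          rw [hcv]
          exact_mod_cast hz
        push_cast at h1
        exact h1
      have hne' : (1:ℂ) - (a:ℂ) ≠ 0 := by
        intro h1; apply hne; linear_combination 2 * h1
      rw [hcv]
      push_cast
      field_simp
      ring
    rw [hconj]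
    have expand : phz v * ((if j = 0 then (1:ℂ) else 0)
        - ((2:ℂ)/(cv v : ℂ)) * (uv v j * (((a:ℂ) - 1) * conj (phz v))))
        = (if j = 0 then phz v else 0)
        - (((2:ℂ)/(cv v : ℂ)) * ((a:ℂ) - 1)) * (uv v j * (phz v * conj (phz v))) := by
      split_ifs <;> ring
    rw [expand, hfact, hφ]
    simp only [uv]
    split_ifs <;> ring
section Meas
variable {α : Type*} [MeasurableSpace α]

lemma measurable_phz (V : α → Fin N → ℂ) (hV : ∀ j, Measurable (fun x => V x j)) :
    Measurable (fun x => phz (V x)) := by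
  unfold phz
  exact Complex.measurable_exp.comp
    ((Complex.measurable_ofReal.comp (Complex.measurable_arg.comp (hV 0))).mul_const _)

lemma measurable_uv (V : α → Fin N → ℂ) (hV : ∀ j, Measurable (fun x => V x j)) (j : Fin N) :
    Measurable (fun x => uv (V x) j) := by
  unfold uv
  by_cases hj : j = 0
  · simp only [hj, if_true]
    exact (hV 0).sub (measurable_phz V hV)
  · simp only [if_neg hj, sub_zero]
    exact hV j

lemma measurable_cv (V : α → Fin N → ℂ) (hV : ∀ j, Measurable (fun x => V x j)) :
    Measurable (fun x => cv (V x)) := by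
  unfold cv
  exact Finset.measurable_sum _ fun i _ =>
    Complex.continuous_normSq.measurable.comp (measurable_uv V hV i)

lemma measurableSet_uv_zero (V : α → Fin N → ℂ) (hV : ∀ j, Measurable (fun x => V x j)) :
    MeasurableSet {x | uv (V x) = 0} := by
  have heq : {x | uv (V x) = 0} = ⋂ j, {x | uv (V x) j = 0} := by
    ext x
    simp [funext_iff]
  rw [heq]
  exact MeasurableSet.iInter fun j => (measurable_uv V hV j) (measurableSet_singleton 0)

lemma measurable_Amat_entry (V : α → Fin N → ℂ) (hV : ∀ j, Measurable (fun x => V x j))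
    (k i : Fin N) : Measurable (fun x => Amat (V x) k i) := by
  have heq : (fun x => Amat (V x) k i) = fun x =>
      if uv (V x) = 0 then (if k = i then phz (V x) else 0)
      else phz (V x) * ((if k = i then 1 else 0)
        - ((2:ℂ)/(cv (V x) : ℂ)) * (uv (V x) k * conj (uv (V x) i))) := by
    funext x
    by_cases h : uv (V x) = 0
    · rw [if_pos h, Amat_apply_eq _ h]
    · rw [if_neg h, Amat_apply_ne _ h]
  rw [heq]
  apply Measurable.ite (measurableSet_uv_zero V hV)
  · by_cases hki : k = i
    · simp only [hki, if_true]
      exact measurable_phz V hV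
    · simp only [if_neg hki]
      exact measurable_const
  · apply Measurable.mul (measurable_phz V hV)
    apply Measurable.sub measurable_const
    apply Measurable.mul
    · exact measurable_const.div (Complex.measurable_ofReal.comp (measurable_cv V hV))
    · exact (measurable_uv V hV k).mul
        (Complex.continuous_conj.measurable.comp (measurable_uv V hV i))
end Meas

lemma transpose_mem_unitary {A : Matrix (Fin N) (Fin N) ℂ}
    (hA : A ∈ Matrix.unitaryGroup (Fin N) ℂ) : A.transpose ∈ Matrix.unitaryGroup (Fin N) ℂ := by
  have h' : star A * A = 1 := Matrix.mem_unitaryGroup_iff'.mp hA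
  apply Matrix.mem_unitaryGroup_iff.mpr
  have key : A.transpose * star A.transpose = (star A * A).transpose := by
    ext i j
    simp only [Matrix.mul_apply, Matrix.transpose_apply, Matrix.star_apply,
      Matrix.conjTranspose_apply]
    exact Finset.sum_congr rfl fun k _ => by ring
  rw [key, h', Matrix.transpose_one]

/-- Measurable completion of a single QMF filter: if `m₀` is measurable, bounded,
and satisfies `Σ_{w^N=z} |m₀(w)|² = 1` a.e., then there are measurable bounded `m₁,…,m_{N-1}`
completing it to a system whose matrix of values at the `N`-th roots is a.e. unitary. -/
theorem stmt11 (N : ℕ) (hN : 2 ≤ N) (m₀ : Circle → ℂ)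
    (hm_meas : Measurable m₀) (hm_bdd : ∃ C, ∀ z, ‖m₀ z‖ ≤ C)
    (hrow : ∀ᵐ z ∂μC, ∑ k : Fin N, ‖m₀ (circRoots N z k)‖ ^ 2 = 1) :
    ∃ m : Fin N → Circle → ℂ,
      (∀ i, Measurable (m i)) ∧ (∀ i, ∃ C, ∀ z, ‖m i z‖ ≤ C) ∧
      m ⟨0, by omega⟩ = m₀ ∧
      ∀ᵐ z ∂μC,
        (Matrix.of fun i j : Fin N => m i (circRoots N z j)) ∈ Matrix.unitaryGroup (Fin N) ℂ := by
  haveI : NeZero N := ⟨by omega⟩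
  have hNpos : 0 < N := by omega
  have h0 : (⟨0, by omega⟩ : Fin N) = 0 := by
    ext
    simp
  set vz : Circle → Fin N → ℂ := fun z k => m₀ (circRoots N z k) with hvz
  have hVmeas : ∀ (k : Fin N), Measurable (fun z => vz z k) := fun k =>
    hm_meas.comp (measurable_circRoots N k)
  refine ⟨fun i w => if i = 0 then m₀ w else Amat (vz (w ^ N)) (rootIdx N hNpos w) i,
    ?_, ?_, ?_, ?_⟩
  · -- measurability
    intro i
    by_cases hi : i = 0
    · simp only [hi, if_true]
      exact hm_meas
    · simp only [if_neg hi]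
      have hrw : (fun w => Amat (vz (w ^ N)) (rootIdx N hNpos w) i)
          = fun w => ∑ k : Fin N,
            if rootIdx N hNpos w = k then Amat (vz (w ^ N)) k i else 0 := by
        funext w
        rw [Finset.sum_ite_eq Finset.univ (rootIdx N hNpos w)
          (fun k => Amat (vz (w ^ N)) k i), if_pos (Finset.mem_univ _)]
      rw [hrw]
      apply Finset.measurable_sum
      intro k _
      have hset : MeasurableSet {w : Circle | rootIdx N hNpos w = k} :=
        (measurable_rootIdx N hNpos) (measurableSet_singleton k)
      exact Measurable.ite hset
        ((measurable_Amat_entry vz hVmeas k i).comp (measurable_pow_n N))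
        measurable_const
  · -- boundedness
    intro i
    by_cases hi : i = 0
    · obtain ⟨C, hC⟩ := hm_bdd
      exact ⟨C, fun w => by simp only [hi, if_true]; exact hC w⟩
    · refine ⟨3, fun w => ?_⟩
      simp only [if_neg hi]
      exact Amat_bound _ _ _
  · -- m 0 = m₀
    funext w
    simp only [if_pos h0]
  · -- a.e. unitarity
    filter_upwards [hrow] with z hz
    have hsum : ∑ k, Complex.normSq (vz z k) = 1 := by
      rw [← hz]
      exact Finset.sum_congr rfl fun k _ => by
        rw [Complex.sq_norm]
    have hmat : (Matrix.of fun i j : Fin N =>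
        (if i = 0 then m₀ (circRoots N z j)
          else Amat (vz ((circRoots N z j) ^ N)) (rootIdx N hNpos (circRoots N z j)) i))
        = (Amat (vz z)).transpose := by
      ext i j
      simp only [Matrix.of_apply, Matrix.transpose_apply]
      by_cases hi : i = 0
      · rw [if_pos hi, hi]
        exact (Amat_col (vz z) hsum j).symm
      · rw [if_neg hi, circRoots_pow N hNpos z j, rootIdx_circRoots N hNpos z j]
    rw [show (Matrix.of fun i j : Fin N =>
        (if i = 0 then m₀ (circRoots N z j)
          else Amat (vz ((circRoots N z j) ^ N)) (rootIdx N hNpos (circRoots N z j)) i))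
        = (Amat (vz z)).transpose from hmat]
    exact transpose_mem_unitary (Amat_unitary _)
end
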